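/- arXiv:2201.00740 — 8 statements merged into one kernel-verified Lean document; each statement's English description precedes it below -/
import Mathlib

section
/- Let C be a triangulated category and X a contravariantly finite rigid subcategory. For objects C, D in C, the following are equivalent: (i) the restricted representable functors H_X(C) = C(-,C)|_X and H_X(D) = C(-,D)|_X are isomorphic in mod X; (ii) there exist morphisms γ : C → A and δ : D → A in C whose images in the quotient category C/[X^⊥₀] are both regular (simultaneously monic and epic); (iii) there exist morphisms μ : B → C and ν : B → D whose images in C/[X^⊥₀] are both regular. -/
open CategoryTheory CategoryTheory.Limits CategoryTheory.Pretriangulated Opposite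

noncomputable section

universe v u

variable (C : Type u) [Category.{v} C] [Preadditive C] [HasZeroObject C]
  [HasShift C ℤ] [∀ n : ℤ, (shiftFunctor C n).Additive] [Pretriangulated C]
  [HasBinaryBiproducts C]

/-- A class of objects is closed under isomorphisms. -/
def ClosedIso (X : C → Prop) : Prop := ∀ ⦃A B : C⦄, (A ≅ B) → X A → X B

/-- A class of objects is closed under direct sums. -/
def ClosedSums (X : C → Prop) : Prop := ∀ ⦃A B : C⦄, X A → X B → X (A ⊞ B)

/-- A class of objects is closed under direct summands. -/
def ClosedSummands (X : C → Prop) : Prop := ∀ ⦃A B : C⦄, X (A ⊞ B) → X A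

/-- An additive subcategory: closed under isomorphisms, direct sums and direct summands. -/
def AdditiveSubcat (X : C → Prop) : Prop := ClosedIso C X ∧ ClosedSums C X ∧ ClosedSummands C X

/-- `X` is rigid: `C(X, ΣX) = 0`. -/
def Rigid (X : C → Prop) : Prop := ∀ ⦃A B : C⦄, X A → X B → ∀ f : A ⟶ B⟦(1:ℤ)⟧, f = 0

/-- `X` is contravariantly finite: every object admits a right `X`-approximation. -/
def ContravariantlyFinite (X : C → Prop) : Prop :=
  ∀ A : C, ∃ (XA : C) (ξ : XA ⟶ A), X XA ∧ ∀ ⦃B : C⦄, X B → ∀ g : B ⟶ A, ∃ h : B ⟶ XA, h ≫ ξ = g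

/-- `X` is covariantly finite: every object admits a left `X`-approximation. -/
def CovariantlyFinite (X : C → Prop) : Prop :=
  ∀ A : C, ∃ (XA : C) (ξ : A ⟶ XA), X XA ∧ ∀ ⦃B : C⦄, X B → ∀ g : A ⟶ B, ∃ h : XA ⟶ B, ξ ≫ h = g

/-- The subgroup of relations defining the Grothendieck group `K₀(C, E_X, s_X)` of the
relative extriangulated structure: one relation `[A] - [B] + [Z]` for each distinguished
triangle `A ⟶ B ⟶ Z ⟶ ΣA` whose connecting morphism vanishes under `C(-,-)|_X`. -/
def relRel (X : C → Prop) : AddSubgroup (FreeAbelianGroup C) :=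
  AddSubgroup.closure {x | ∃ (A B Z : C) (f : A ⟶ B) (g : B ⟶ Z) (δ : Z ⟶ A⟦(1:ℤ)⟧),
    (Triangle.mk f g δ ∈ distTriang C) ∧
    (∀ ⦃T : C⦄, X T → ∀ ξ : T ⟶ Z, ξ ≫ δ = 0) ∧
    x = FreeAbelianGroup.of A - FreeAbelianGroup.of B + FreeAbelianGroup.of Z}

/-- The Grothendieck group `K₀(C, E_X, s_X)` of the relative extriangulated structure. -/
abbrev K0rel (X : C → Prop) := FreeAbelianGroup C ⧸ relRel C X

/-- The class `[A]_X` in `K₀(C, E_X, s_X)`. -/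
def clsRel (X : C → Prop) (A : C) : K0rel C X := QuotientAddGroup.mk (FreeAbelianGroup.of A)

/-- The restricted Yoneda functor `H_X : C ⥤ (X^op ⥤ Ab)`, `H_X(A) = C(-,A)|_X`. -/
def HX (X : C → Prop) : C ⥤ ((ObjectProperty.FullSubcategory X)ᵒᵖ ⥤ AddCommGrpCat.{v}) :=
  preadditiveYoneda ⋙ (Functor.whiskeringLeft _ _ _).obj (ObjectProperty.ι X).op

/-- A functor `X^op ⥤ Ab` is finitely presented if it is the cokernel of a morphism of
restricted representables, i.e. it admits a presentation `X(-,X₁) → X(-,X₀) → L → 0`. -/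
def FinPres (X : C → Prop) (L : (ObjectProperty.FullSubcategory X)ᵒᵖ ⥤ AddCommGrpCat.{v}) : Prop :=
  ∃ (X₁ X₀ : C) (_ : X X₁) (_ : X X₀) (f : X₁ ⟶ X₀),
    Nonempty (L ≅ cokernel ((HX C X).map f))

/-- The objects of `mod X`: finitely presented additive functors `X^op ⥤ Ab`. -/
abbrev ModObj (X : C → Prop) := {L : (ObjectProperty.FullSubcategory X)ᵒᵖ ⥤ AddCommGrpCat.{v} // FinPres C X L}

/-- Relations for the Grothendieck group of `mod X`: one for each short exact sequence. -/
def sesRel (X : C → Prop) : AddSubgroup (FreeAbelianGroup (ModObj C X)) :=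
  AddSubgroup.closure {x | ∃ (A B Z : ModObj C X) (f : A.1 ⟶ B.1) (g : B.1 ⟶ Z.1)
    (w : f ≫ g = 0), (ShortComplex.mk f g w).ShortExact ∧
    x = FreeAbelianGroup.of A - FreeAbelianGroup.of B + FreeAbelianGroup.of Z}

/-- The Grothendieck group `K₀(mod X)`. -/
abbrev K0mod (X : C → Prop) := FreeAbelianGroup (ModObj C X) ⧸ sesRel C X

/-- The class `[L]` in `K₀(mod X)`. -/
def clsMod (X : C → Prop) (L : ModObj C X) : K0mod C X :=
  QuotientAddGroup.mk (FreeAbelianGroup.of L)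

/-- `θ` is the homomorphism `K₀(mod X) → K₀(C,E_X,s_X)` with `[H_X(Z)] ↦ [Z]_X + [Σ⁻¹Z]_X`. -/
def IsTheta (X : C → Prop) (θ : K0mod C X →+ K0rel C X) : Prop :=
  ∀ (Z : C) (h : FinPres C X ((HX C X).obj Z)),
    θ (clsMod C X ⟨(HX C X).obj Z, h⟩) = clsRel C X Z + clsRel C X (Z⟦(-1:ℤ)⟧)


/-- The perpendicular class `X^⊥₀ = {A : C(X,A) = 0}`. -/
def Perp (X : C → Prop) : C → Prop := fun A => ∀ ⦃T : C⦄, X T → ∀ f : T ⟶ A, f = 0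

/-- The hom relation identifying two morphisms whose difference factors through `X^⊥₀`. -/
def perpRel (X : C → Prop) : HomRel C := fun {A B} f g =>
  ∃ (Z : C) (p : A ⟶ Z) (q : Z ⟶ B), Perp C X Z ∧ f - g = p ≫ q

/-- The additive quotient `C/[X^⊥₀]`. -/
abbrev QuotPerp (X : C → Prop) := CategoryTheory.Quotient (perpRel C X)

/-- The quotient functor `C ⥤ C/[X^⊥₀]`, `A ↦ Ā`. -/
def quotPerp (X : C → Prop) : C ⥤ QuotPerp C X := Quotient.functor (perpRel C X)

namespace IndexAuxJS

open ZeroObject CategoryTheory.Preadditive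

lemma perp_zero (X : C → Prop) : Perp C X 0 :=
  fun _ _ f => (Limits.isZero_zero C).eq_of_tgt f 0

lemma perp_biprod (X : C → Prop) {Z₁ Z₂ : C} (h₁ : Perp C X Z₁) (h₂ : Perp C X Z₂) :
    Perp C X (Z₁ ⊞ Z₂) := by
  intro T hT f
  apply biprod.hom_ext
  · rw [zero_comp]; exact h₁ hT _
  · rw [zero_comp]; exact h₂ hT _

theorem perpCongruence (X : C → Prop) : Congruence (perpRel C X) where
  equivalence := by
    intro A B
    constructor
    · intro f
      exact ⟨0, 0, 0, perp_zero C X, by simp⟩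
    · rintro f g ⟨Z, p, q, hZ, h⟩
      exact ⟨Z, -p, q, hZ, by rw [neg_comp, ← h, neg_sub]⟩
    · rintro f g h ⟨Z₁, p₁, q₁, hZ₁, h₁⟩ ⟨Z₂, p₂, q₂, hZ₂, h₂⟩
      refine ⟨Z₁ ⊞ Z₂, biprod.lift p₁ p₂, biprod.desc q₁ q₂, perp_biprod C X hZ₁ hZ₂, ?_⟩
      rw [biprod.lift_desc, ← h₁, ← h₂]
      abel
  comp_left := by
    rintro A B Z f g g' ⟨W, p, q, hW, h⟩
    exact ⟨W, f ≫ p, q, hW, by rw [← comp_sub, h, Category.assoc]⟩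
  comp_right := by
    rintro A B Z f f' g ⟨W, p, q, hW, h⟩
    exact ⟨W, p, q ≫ g, hW, by rw [← sub_comp, h, Category.assoc]⟩

lemma quot_map_eq_iff (X : C → Prop) {A B : C} (f g : A ⟶ B) :
    (quotPerp C X).map f = (quotPerp C X).map g ↔ perpRel C X f g := by
  haveI := perpCongruence C X
  exact Quotient.functor_map_eq_iff _ _ _

/-- Factorization through the perpendicular subcategory of a morphism killed by `X`. -/
lemma factor_perp (X : C → Prop) (hcf : ContravariantlyFinite C X) (hrig : Rigid C X)
    {A B : C} (f : A ⟶ B) (h0 : ∀ ⦃T : C⦄, X T → ∀ t : T ⟶ A, t ≫ f = 0) :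
    ∃ (Z : C) (p : A ⟶ Z) (q : Z ⟶ B), Perp C X Z ∧ f = p ≫ q := by
  obtain ⟨XA, ξ, hXA, happrox⟩ := hcf A
  obtain ⟨Z, p, δ, hT⟩ := Pretriangulated.distinguished_cocone_triangle ξ
  obtain ⟨(q : Z ⟶ B), hq⟩ := Pretriangulated.Triangle.yoneda_exact₂ _ hT f (h0 hXA ξ)
  refine ⟨Z, p, q, ?_, hq⟩
  intro T hT' t
  obtain ⟨(s : T ⟶ A), hs⟩ := Pretriangulated.Triangle.coyoneda_exact₃ _ hT t (hrig hT' hXA _)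
  replace hs : t = s ≫ p := hs
  obtain ⟨u, hu⟩ := happrox hT' s
  have hz : ξ ≫ p = 0 := Pretriangulated.comp_distTriang_mor_zero₁₂ _ hT
  rw [hs, ← hu, Category.assoc, hz, comp_zero]

/-- `H_X`-bijectivity of a morphism: composition with it is bijective on morphisms from `X`. -/
def HBij (X : C → Prop) {A B : C} (f : A ⟶ B) : Prop :=
  ∀ ⦃T : C⦄, X T →
    (∀ t : T ⟶ B, ∃ s : T ⟶ A, s ≫ f = t) ∧ (∀ s : T ⟶ A, s ≫ f = 0 → s = 0)

lemma perpRel_of_killed (X : C → Prop) (hcf : ContravariantlyFinite C X) (hrig : Rigid C X)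
    {A B : C} (f g : A ⟶ B) (h0 : ∀ ⦃T : C⦄, X T → ∀ t : T ⟶ A, t ≫ (f - g) = 0) :
    perpRel C X f g := by
  obtain ⟨Z, p, q, hZ, h⟩ := factor_perp C X hcf hrig (f - g) h0
  exact ⟨Z, p, q, hZ, h⟩

lemma hbij_of_regular (X : C → Prop) {A B : C} (f : A ⟶ B)
    (hm : Mono ((quotPerp C X).map f)) (he : Epi ((quotPerp C X).map f)) : HBij C X f := by
  obtain ⟨Z, p, δ, hT⟩ := Pretriangulated.distinguished_cocone_triangle f
  have hp : perpRel C X p 0 := by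
    rw [← quot_map_eq_iff]
    refine he.left_cancellation _ _ ?_
    have hz : f ≫ p = 0 := Pretriangulated.comp_distTriang_mor_zero₁₂ _ hT
    rw [← Functor.map_comp, ← Functor.map_comp, hz, comp_zero]
  obtain ⟨W, u, v, hW, huv⟩ := hp
  rw [sub_zero] at huv
  intro T hTX
  constructor
  · intro t
    have htp : t ≫ p = 0 := by
      rw [huv, ← Category.assoc, hW hTX (t ≫ u), zero_comp]
    obtain ⟨(s : T ⟶ A), hs⟩ := Pretriangulated.Triangle.coyoneda_exact₂ _ hT t htp
    exact ⟨s, hs.symm⟩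
  · intro s hs
    have : (quotPerp C X).map s = (quotPerp C X).map 0 := by
      refine hm.right_cancellation _ _ ?_
      rw [← Functor.map_comp, ← Functor.map_comp, hs, zero_comp]
    rw [quot_map_eq_iff] at this
    obtain ⟨W', u', v', hW', h'⟩ := this
    rw [sub_zero] at h'
    rw [h', hW' hTX u', zero_comp]

lemma regular_of_hbij (X : C → Prop) (hcf : ContravariantlyFinite C X) (hrig : Rigid C X)
    {A B : C} (f : A ⟶ B) (hb : HBij C X f) :
    Mono ((quotPerp C X).map f) ∧ Epi ((quotPerp C X).map f) := by
  haveI : (quotPerp C X).Full := Quotient.full_functor _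
  constructor
  · constructor
    intro Q g h hgh
    obtain ⟨g₀, rfl⟩ := (quotPerp C X).map_surjective g
    obtain ⟨h₀, rfl⟩ := (quotPerp C X).map_surjective h
    change (quotPerp C X).map g₀ ≫ (quotPerp C X).map f =
      (quotPerp C X).map h₀ ≫ (quotPerp C X).map f at hgh
    rw [← Functor.map_comp, ← Functor.map_comp, quot_map_eq_iff] at hgh
    obtain ⟨Z, p, q, hZ, heq⟩ := hgh
    change (quotPerp C X).map g₀ = (quotPerp C X).map h₀
    rw [quot_map_eq_iff]
    refine perpRel_of_killed C X hcf hrig _ _ ?_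
    intro T hT t
    refine (hb hT).2 _ ?_
    have : t ≫ (g₀ - h₀) ≫ f = 0 := by
      rw [sub_comp, heq, ← Category.assoc, hZ hT (t ≫ p), zero_comp]
    rw [Category.assoc]
    exact this
  · constructor
    intro Q g h hgh
    obtain ⟨g₀, rfl⟩ := (quotPerp C X).map_surjective g
    obtain ⟨h₀, rfl⟩ := (quotPerp C X).map_surjective h
    change (quotPerp C X).map f ≫ (quotPerp C X).map g₀ =
      (quotPerp C X).map f ≫ (quotPerp C X).map h₀ at hgh
    rw [← Functor.map_comp, ← Functor.map_comp, quot_map_eq_iff] at hgh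
    obtain ⟨Z, p, q, hZ, heq⟩ := hgh
    change (quotPerp C X).map g₀ = (quotPerp C X).map h₀
    rw [quot_map_eq_iff]
    refine perpRel_of_killed C X hcf hrig _ _ ?_
    intro T hT t
    obtain ⟨s, hs⟩ := (hb hT).1 t
    rw [← hs, Category.assoc, comp_sub, heq, ← Category.assoc, hZ hT (s ≫ p), zero_comp]

lemma HX_map_app (X : C → Prop) {A B : C} (f : A ⟶ B) (T : (ObjectProperty.FullSubcategory X)ᵒᵖ)
    (t : T.unop.obj ⟶ A) : ((HX C X).map f).app T t = t ≫ f := rfl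


lemma isIso_HX_map (X : C → Prop) {A B : C} (f : A ⟶ B) (hb : HBij C X f) :
    IsIso ((HX C X).map f) := by
  have : ∀ T : (ObjectProperty.FullSubcategory X)ᵒᵖ, IsIso (((HX C X).map f).app T) := by
    intro T
    rw [ConcreteCategory.isIso_iff_bijective]
    constructor
    · intro a b hab
      have h1 : ((show T.unop.obj ⟶ A from a) - (show T.unop.obj ⟶ A from b)) ≫ f = 0 := by
        have : (a : T.unop.obj ⟶ A) ≫ f = (b : T.unop.obj ⟶ A) ≫ f := hab
        rw [sub_comp, sub_eq_zero]
        exact this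
      have := (hb T.unop.property).2 _ h1
      exact sub_eq_zero.mp this
    · intro t
      obtain ⟨s, hs⟩ := (hb T.unop.property).1 t
      exact ⟨s, hs⟩
  exact NatIso.isIso_of_isIso_app _

section Constructions

variable (X : C → Prop) {Cc Dd : C} (φ : (HX C X).obj Cc ≅ (HX C X).obj Dd)

/-- Elementwise action of `φ.hom`. -/
def phiH {T : C} (hT : X T) (t : T ⟶ Cc) : T ⟶ Dd :=
  φ.hom.app (op (⟨T, hT⟩ : ObjectProperty.FullSubcategory X)) t

/-- Elementwise action of `φ.inv`. -/
def phiI {T : C} (hT : X T) (s : T ⟶ Dd) : T ⟶ Cc :=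
  φ.inv.app (op (⟨T, hT⟩ : ObjectProperty.FullSubcategory X)) s

lemma phiH_nat {T T' : C} (hT : X T) (hT' : X T') (u : T ⟶ T') (t : T' ⟶ Cc) :
    phiH C X φ hT (u ≫ t) = u ≫ phiH C X φ hT' t := by
  have h1 : (((HX C X).obj Cc).map (Quiver.Hom.op
        (show (⟨T, hT⟩ : ObjectProperty.FullSubcategory X) ⟶ ⟨T', hT'⟩ from ObjectProperty.homMk u)) ≫
        φ.hom.app (op (⟨T, hT⟩ : ObjectProperty.FullSubcategory X))) t
      = (φ.hom.app (op (⟨T', hT'⟩ : ObjectProperty.FullSubcategory X)) ≫ ((HX C X).obj Dd).map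
        (Quiver.Hom.op (show (⟨T, hT⟩ : ObjectProperty.FullSubcategory X) ⟶ ⟨T', hT'⟩ from ObjectProperty.homMk u))) t := by
    rw [φ.hom.naturality]
  exact h1

lemma phiI_H {T : C} (hT : X T) (t : T ⟶ Cc) :
    phiI C X φ hT (phiH C X φ hT t) = t := by
  have h2 := φ.hom_inv_id_app (op (⟨T, hT⟩ : ObjectProperty.FullSubcategory X))
  change (φ.hom.app (op (⟨T, hT⟩ : ObjectProperty.FullSubcategory X)) ≫
          φ.inv.app (op (⟨T, hT⟩ : ObjectProperty.FullSubcategory X))) t = t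
  rw [h2]; rfl

lemma phiH_I {T : C} (hT : X T) (s : T ⟶ Dd) :
    phiH C X φ hT (phiI C X φ hT s) = s := by
  have h2 := φ.inv_hom_id_app (op (⟨T, hT⟩ : ObjectProperty.FullSubcategory X))
  change (φ.inv.app (op (⟨T, hT⟩ : ObjectProperty.FullSubcategory X)) ≫
          φ.hom.app (op (⟨T, hT⟩ : ObjectProperty.FullSubcategory X))) s = s
  rw [h2]; rfl

lemma phiH_zero {T : C} (hT : X T) : phiH C X φ hT 0 = 0 := by
  have h := phiH_nat C X φ hT hT (0 : T ⟶ T) (0 : T ⟶ Cc)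
  rwa [zero_comp, zero_comp] at h

lemma phiI_zero {T : C} (hT : X T) : phiI C X φ hT 0 = 0 := by
  have h := phiI_H C X φ hT (0 : T ⟶ Cc)
  rwa [phiH_zero] at h

include φ in
lemma span_of_iso (hcf : ContravariantlyFinite C X) (hrig : Rigid C X) :
    ∃ (A : C) (γ : Cc ⟶ A) (δ : Dd ⟶ A), HBij C X γ ∧ HBij C X δ := by
  obtain ⟨XC, x, hXC, hx⟩ := hcf Cc
  set d : XC ⟶ Dd := phiH C X φ hXC x with hd
  obtain ⟨A, g, θ, hTri⟩ :=
    Pretriangulated.distinguished_cocone_triangle (biprod.lift x (-d) : XC ⟶ Cc ⊞ Dd)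
  have hzero : biprod.lift x (-d) ≫ g = 0 :=
    Pretriangulated.comp_distTriang_mor_zero₁₂ _ hTri
  set γ : Cc ⟶ A := biprod.inl ≫ g with hγ
  set δ : Dd ⟶ A := biprod.inr ≫ g with hδ
  have hlift : ∀ {T : C} (t : T ⟶ Cc) (s : T ⟶ Dd),
      biprod.lift t s ≫ g = t ≫ γ + s ≫ δ := by
    intro T t s
    rw [hγ, hδ, biprod.lift_eq, add_comp, Category.assoc, Category.assoc]
  have hud : ∀ {T : C} (hT : X T) (u : T ⟶ XC),
      u ≫ d = phiH C X φ hT (u ≫ x) := by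
    intro T hT u
    rw [hd, phiH_nat C X φ hT hXC u x]
  have key : ∀ {T : C} (hT : X T) (s : T ⟶ Dd),
      phiI C X φ hT s ≫ γ = s ≫ δ := by
    intro T hT s
    obtain ⟨u, hu⟩ := hx hT (phiI C X φ hT s)
    have h2 : u ≫ d = s := by
      rw [hud hT u, hu, phiH_I]
    have h3 : biprod.lift (u ≫ x) (-(u ≫ d)) ≫ g = 0 := by
      have h3' : biprod.lift (u ≫ x) (-(u ≫ d)) = u ≫ biprod.lift x (-d) := by
        apply biprod.hom_ext <;> simp
      rw [h3', Category.assoc, hzero, comp_zero]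
    rw [hlift] at h3
    have h4 : (u ≫ x) ≫ γ = (u ≫ d) ≫ δ := by
      rw [neg_comp, ← sub_eq_add_neg, sub_eq_zero] at h3
      exact h3
    rw [← hu, ← h2]
    exact h4
  have key2 : ∀ {T : C} (hT : X T) (t : T ⟶ Cc),
      t ≫ γ = phiH C X φ hT t ≫ δ := by
    intro T hT t
    have h5 := key hT (phiH C X φ hT t)
    rwa [phiI_H] at h5
  refine ⟨A, γ, δ, ?_, ?_⟩
  · intro T hT
    constructor
    · intro a
      obtain ⟨(w : T ⟶ Cc ⊞ Dd), hw⟩ := Pretriangulated.Triangle.coyoneda_exact₃ _ hTri a (hrig hT hXC _)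
      replace hw : a = w ≫ g := hw
      have hw2 : w = biprod.lift (w ≫ biprod.fst) (w ≫ biprod.snd) := by
        apply biprod.hom_ext <;> simp
      have ha : a = (w ≫ biprod.fst) ≫ γ + (w ≫ biprod.snd) ≫ δ := by
        calc a = w ≫ g := hw
          _ = biprod.lift (w ≫ biprod.fst) (w ≫ biprod.snd) ≫ g := by rw [← hw2]
          _ = _ := hlift _ _
      refine ⟨w ≫ biprod.fst + phiI C X φ hT (w ≫ biprod.snd), ?_⟩
      rw [ha, add_comp, key hT]
    · intro t ht
      have h5 : biprod.lift t (0 : T ⟶ Dd) ≫ g = 0 := by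
        rw [hlift, ht, zero_comp, add_zero]
      obtain ⟨(u : T ⟶ XC), hu⟩ := Pretriangulated.Triangle.coyoneda_exact₂ _ hTri _ h5
      replace hu : biprod.lift t (0 : T ⟶ Dd) = u ≫ biprod.lift x (-d) := hu
      have hux : t = u ≫ x := by
        have h6 := congrArg (fun z => z ≫ biprod.fst) hu
        simpa using h6
      have hud0 : u ≫ d = 0 := by
        have h6 : u ≫ (-d) = 0 := by
          have h7 := congrArg (fun z => z ≫ biprod.snd) hu
          simpa using h7.symm
        rw [comp_neg] at h6
        exact neg_eq_zero.mp h6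
      have h7 : phiH C X φ hT t = 0 := by
        have h10 : phiH C X φ hT t = phiH C X φ hT (u ≫ x) := congrArg _ hux
        exact h10.trans ((hud hT u).symm.trans hud0)
      have h8 := congrArg (phiI C X φ hT) h7
      rw [phiI_H, phiI_zero] at h8
      exact h8
  · intro T hT
    constructor
    · intro a
      obtain ⟨(w : T ⟶ Cc ⊞ Dd), hw⟩ := Pretriangulated.Triangle.coyoneda_exact₃ _ hTri a (hrig hT hXC _)
      replace hw : a = w ≫ g := hw
      have hw2 : w = biprod.lift (w ≫ biprod.fst) (w ≫ biprod.snd) := by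
        apply biprod.hom_ext <;> simp
      have ha : a = (w ≫ biprod.fst) ≫ γ + (w ≫ biprod.snd) ≫ δ := by
        calc a = w ≫ g := hw
          _ = biprod.lift (w ≫ biprod.fst) (w ≫ biprod.snd) ≫ g := by rw [← hw2]
          _ = _ := hlift _ _
      refine ⟨phiH C X φ hT (w ≫ biprod.fst) + w ≫ biprod.snd, ?_⟩
      rw [ha, add_comp, ← key2 hT]
    · intro s hs
      have h5 : biprod.lift (0 : T ⟶ Cc) s ≫ g = 0 := by
        rw [hlift, hs, zero_comp, zero_add]
      obtain ⟨(u : T ⟶ XC), hu⟩ := Pretriangulated.Triangle.coyoneda_exact₂ _ hTri _ h5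
      replace hu : biprod.lift (0 : T ⟶ Cc) s = u ≫ biprod.lift x (-d) := hu
      have hux : u ≫ x = 0 := by
        have h6 := congrArg (fun z => z ≫ biprod.fst) hu
        simpa using h6.symm
      have hus : s = -(u ≫ d) := by
        have h6 := congrArg (fun z => z ≫ biprod.snd) hu
        simpa [comp_neg] using h6
      have h9 : u ≫ d = 0 := by
        have h10 : phiH C X φ hT (u ≫ x) = phiH C X φ hT 0 := congrArg _ hux
        rw [phiH_zero] at h10
        exact (hud hT u).trans h10
      rw [hus, neg_eq_zero]
      exact h9

include φ in
lemma cospan_of_iso (hcf : ContravariantlyFinite C X) (hrig : Rigid C X) :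
    ∃ (B : C) (μ : B ⟶ Cc) (ν : B ⟶ Dd), HBij C X μ ∧ HBij C X ν := by
  obtain ⟨XC, x, hXC, hx⟩ := hcf Cc
  set d : XC ⟶ Dd := phiH C X φ hXC x with hd
  have hud : ∀ {T : C} (hT : X T) (u : T ⟶ XC),
      u ≫ d = phiH C X φ hT (u ≫ x) := by
    intro T hT u
    rw [hd, phiH_nat C X φ hT hXC u x]
  obtain ⟨K, k, σ, hK⟩ := Pretriangulated.distinguished_cocone_triangle₁ x
  obtain ⟨XK, xk, hXK, hxk⟩ := hcf K
  set f : XK ⟶ XC := xk ≫ k with hf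
  obtain ⟨B, q, θ, hB⟩ := Pretriangulated.distinguished_cocone_triangle f
  have hfq : f ≫ q = 0 := Pretriangulated.comp_distTriang_mor_zero₁₂ _ hB
  have hkx : k ≫ x = 0 := Pretriangulated.comp_distTriang_mor_zero₁₂ _ hK
  have hfx : f ≫ x = 0 := by rw [hf, Category.assoc, hkx, comp_zero]
  have hfd : f ≫ d = 0 := by
    rw [hud hXK f, hfx, phiH_zero]
  obtain ⟨(μ : B ⟶ Cc), hμ⟩ := Pretriangulated.Triangle.yoneda_exact₂ _ hB x hfx
  replace hμ : x = q ≫ μ := hμ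
  obtain ⟨(ν : B ⟶ Dd), hν⟩ := Pretriangulated.Triangle.yoneda_exact₂ _ hB d hfd
  replace hν : d = q ≫ ν := hν
  have lift_q : ∀ {T : C}, X T → ∀ v : T ⟶ B, ∃ u : T ⟶ XC, u ≫ q = v := by
    intro T hT v
    obtain ⟨(u : T ⟶ XC), hu⟩ := Pretriangulated.Triangle.coyoneda_exact₃ _ hB v (hrig hT hXK _)
    replace hu : v = u ≫ q := hu
    exact ⟨u, hu.symm⟩
  have kill : ∀ {T : C}, X T → ∀ u : T ⟶ XC, u ≫ x = 0 → u ≫ q = 0 := by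
    intro T hT u hux
    obtain ⟨(w : T ⟶ K), hw⟩ := Pretriangulated.Triangle.coyoneda_exact₂ _ hK u hux
    replace hw : u = w ≫ k := hw
    obtain ⟨w', hw'⟩ := hxk hT w
    have hfq' : xk ≫ k ≫ q = 0 := by
      rw [← Category.assoc, ← hf]
      exact hfq
    rw [hw, ← hw', Category.assoc, Category.assoc, hfq', comp_zero]
  refine ⟨B, μ, ν, ?_, ?_⟩
  · intro T hT
    constructor
    · intro t
      obtain ⟨u, hu⟩ := hx hT t
      exact ⟨u ≫ q, by rw [Category.assoc, ← hμ, hu]⟩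
    · intro v hv
      obtain ⟨u, hu⟩ := lift_q hT v
      have hux : u ≫ x = 0 := by
        rw [hμ, ← Category.assoc, hu, hv]
      rw [← hu, kill hT u hux]
  · intro T hT
    constructor
    · intro t
      obtain ⟨u, hu⟩ := hx hT (phiI C X φ hT t)
      have h2 : u ≫ d = t := by
        rw [hud hT u, hu, phiH_I]
      exact ⟨u ≫ q, by rw [Category.assoc, ← hν, h2]⟩
    · intro v hv
      obtain ⟨u, hu⟩ := lift_q hT v
      have hud0 : u ≫ d = 0 := by
        rw [hν, ← Category.assoc, hu, hv]
      have hux : u ≫ x = 0 := by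
        have h7 := hud hT u
        rw [hud0] at h7
        have h8 := congrArg (phiI C X φ hT) h7.symm
        rw [phiI_H, phiI_zero] at h8
        exact h8
      rw [← hu, kill hT u hux]

end Constructions

end IndexAuxJS

/-- For objects `Cc, Dd` the following are equivalent: (i) `H_X(Cc) ≅ H_X(Dd)`
in `mod X`; (ii) there is a span `Cc ⟶ A ⟵ Dd` whose legs become regular (mono and epi) in
`C/[X^⊥₀]`; (iii) there is a cospan `Cc ⟵ B ⟶ Dd` whose legs become regular in `C/[X^⊥₀]`. -/
theorem iso_HX_iff_regular_span_iff_regular_cospan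
    [IsIdempotentComplete C] (X : C → Prop)
    (hadd : AdditiveSubcat C X) (hcf : ContravariantlyFinite C X) (hrig : Rigid C X)
    (Cc Dd : C) :
    (Nonempty ((HX C X).obj Cc ≅ (HX C X).obj Dd) ↔
      ∃ (A : C) (γ : Cc ⟶ A) (δ : Dd ⟶ A),
        (Mono ((quotPerp C X).map γ) ∧ Epi ((quotPerp C X).map γ)) ∧
        (Mono ((quotPerp C X).map δ) ∧ Epi ((quotPerp C X).map δ))) ∧
    (Nonempty ((HX C X).obj Cc ≅ (HX C X).obj Dd) ↔
      ∃ (B : C) (μ : B ⟶ Cc) (ν : B ⟶ Dd),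
        (Mono ((quotPerp C X).map μ) ∧ Epi ((quotPerp C X).map μ)) ∧
        (Mono ((quotPerp C X).map ν) ∧ Epi ((quotPerp C X).map ν))) := by
  constructor
  · constructor
    · rintro ⟨φ⟩
      obtain ⟨A, γ, δ, hγ, hδ⟩ := IndexAuxJS.span_of_iso C X φ hcf hrig
      exact ⟨A, γ, δ, IndexAuxJS.regular_of_hbij C X hcf hrig γ hγ,
        IndexAuxJS.regular_of_hbij C X hcf hrig δ hδ⟩
    · rintro ⟨A, γ, δ, ⟨mγ, eγ⟩, ⟨mδ, eδ⟩⟩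
      haveI := IndexAuxJS.isIso_HX_map C X γ (IndexAuxJS.hbij_of_regular C X γ mγ eγ)
      haveI := IndexAuxJS.isIso_HX_map C X δ (IndexAuxJS.hbij_of_regular C X δ mδ eδ)
      exact ⟨asIso ((HX C X).map γ) ≪≫ (asIso ((HX C X).map δ)).symm⟩
  · constructor
    · rintro ⟨φ⟩
      obtain ⟨B, μ, ν, hμ, hν⟩ := IndexAuxJS.cospan_of_iso C X φ hcf hrig
      exact ⟨B, μ, ν, IndexAuxJS.regular_of_hbij C X hcf hrig μ hμ,
        IndexAuxJS.regular_of_hbij C X hcf hrig ν hν⟩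
    · rintro ⟨B, μ, ν, ⟨mμ, eμ⟩, ⟨mν, eν⟩⟩
      haveI := IndexAuxJS.isIso_HX_map C X μ (IndexAuxJS.hbij_of_regular C X μ mμ eμ)
      haveI := IndexAuxJS.isIso_HX_map C X ν (IndexAuxJS.hbij_of_regular C X ν mν eν)
      exact ⟨(asIso ((HX C X).map μ)).symm ≪≫ asIso ((HX C X).map ν)⟩

end
end

section
/- Let C be a triangulated category and X a contravariantly finite rigid subcategory. If C(-,C)|_X ≅ C(-,D)|_X in mod X for objects C, D ∈ C, then in the relative Grothendieck group K₀(C, E_X, s_X) one has [C]_X + [Σ⁻¹C]_X = [D]_X + [Σ⁻¹D]_X. -/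
open CategoryTheory CategoryTheory.Limits CategoryTheory.Pretriangulated Opposite

noncomputable section

universe v u

variable (C : Type u) [Category.{v} C] [Preadditive C] [HasZeroObject C]
  [HasShift C ℤ] [∀ n : ℤ, (shiftFunctor C n).Additive] [Pretriangulated C]
  [HasBinaryBiproducts C]

/-- Auxiliary: each distinguished triangle with `X`-ghost connecting morphism yields the
relation `[obj₁] + [obj₃] = [obj₂]` in `K₀(C, E_X, s_X)`. -/
theorem clsRel_add_of_ghost (X : C → Prop) (T : Triangle C) (hT : T ∈ distTriang C)
    (hδ : ∀ ⦃A : C⦄, X A → ∀ ζ : A ⟶ T.obj₃, ζ ≫ T.mor₃ = 0) :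
    clsRel C X T.obj₁ + clsRel C X T.obj₃ = clsRel C X T.obj₂ := by
  have hmem : FreeAbelianGroup.of T.obj₁ - FreeAbelianGroup.of T.obj₂ +
      FreeAbelianGroup.of T.obj₃ ∈ relRel C X :=
    AddSubgroup.subset_closure ⟨T.obj₁, T.obj₂, T.obj₃, T.mor₁, T.mor₂, T.mor₃, hT, hδ, rfl⟩
  have h : clsRel C X T.obj₁ - clsRel C X T.obj₂ + clsRel C X T.obj₃ = 0 := by
    show QuotientAddGroup.mk _ - QuotientAddGroup.mk _ + QuotientAddGroup.mk _ = (0 : K0rel C X)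
    rw [← QuotientAddGroup.mk_sub, ← QuotientAddGroup.mk_add, QuotientAddGroup.eq_zero_iff]
    exact hmem
  rw [sub_add_eq_add_sub, sub_eq_zero] at h
  exact h

/-- Auxiliary: if every map from `X` to `A` which is killed by `τ : A ⟶ B` vanishes, then
the `(-1)`-shift of the connecting morphism of a cone triangle on `τ` is `X`-ghost. -/
theorem shift_ghost_aux (X : C → Prop) {A B W : C} (τ : A ⟶ B) (ρ : B ⟶ W)
    (δ : W ⟶ A⟦(1:ℤ)⟧) (hTri : Triangle.mk τ ρ δ ∈ distTriang C)
    (hmono : ∀ ⦃T : C⦄, X T → ∀ w : T ⟶ A, w ≫ τ = 0 → w = 0) :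
    ∀ ⦃T : C⦄, X T → ∀ t : T ⟶ W⟦(-1:ℤ)⟧, t ≫ δ⟦(-1:ℤ)⟧' = 0 := by
  intro T hT t
  have h31 : δ ≫ τ⟦(1:ℤ)⟧' = 0 := by
    have := comp_distTriang_mor_zero₃₁ (Triangle.mk τ ρ δ) hTri
    exact this
  let e := shiftFunctorCompIsoId C (-1 : ℤ) (1 : ℤ) (by norm_num)
  let u : (T⟦(1:ℤ)⟧ : C) ⟶ W := (t⟦(1:ℤ)⟧') ≫ e.hom.app W
  have hv : (u ≫ δ) ≫ τ⟦(1:ℤ)⟧' = 0 := by rw [Category.assoc, h31, comp_zero]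
  obtain ⟨w, hw⟩ := (shiftFunctor C (1:ℤ)).map_surjective (u ≫ δ)
  have hwτ : w ≫ τ = 0 := by
    apply (shiftFunctor C (1:ℤ)).map_injective
    rw [Functor.map_comp, hw, Functor.map_zero]
    exact hv
  have hw0 : u ≫ δ = 0 := by rw [← hw, hmono hT w hwτ, Functor.map_zero]
  apply (shiftFunctor C (1:ℤ)).map_injective
  rw [Functor.map_comp, Functor.map_zero]
  have hnat : (δ⟦(-1:ℤ)⟧')⟦(1:ℤ)⟧' ≫ e.hom.app (A⟦(1:ℤ)⟧) = e.hom.app W ≫ δ :=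
    e.hom.naturality δ
  have h2 : (t⟦(1:ℤ)⟧' ≫ (δ⟦(-1:ℤ)⟧')⟦(1:ℤ)⟧') ≫ e.hom.app (A⟦(1:ℤ)⟧) = 0 := by
    rw [Category.assoc, hnat, ← Category.assoc]
    exact hw0
  exact (cancel_mono (e.hom.app (A⟦(1:ℤ)⟧))).1 (by rw [h2, zero_comp])

/-- If `H_X(Cc) ≅ H_X(Dd)` in `mod X`, then
`[Cc]_X + [Σ⁻¹Cc]_X = [Dd]_X + [Σ⁻¹Dd]_X` in `K₀(C, E_X, s_X)`. -/
theorem index_plus_desuspension_invariant_of_iso_HX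
    [IsIdempotentComplete C] (X : C → Prop)
    (hadd : AdditiveSubcat C X) (hcf : ContravariantlyFinite C X) (hrig : Rigid C X)
    (Cc Dd : C) (hiso : Nonempty ((HX C X).obj Cc ≅ (HX C X).obj Dd)) :
    clsRel C X Cc + clsRel C X (Cc⟦(-1:ℤ)⟧) = clsRel C X Dd + clsRel C X (Dd⟦(-1:ℤ)⟧) := by
  obtain ⟨φ⟩ := hiso
  obtain ⟨X₀, ξ, hX₀, hξ⟩ := hcf Cc
  -- the morphism `f : X₀ ⟶ Dd` corresponding to `ξ` under `φ`
  let fD : X₀ ⟶ Dd := φ.hom.app (op ⟨X₀, hX₀⟩) ξ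
  have Φnat : ∀ (T : C) (hT : X T) (u : T ⟶ X₀),
      u ≫ fD = φ.hom.app (op ⟨T, hT⟩) (u ≫ ξ) := by
    intro T hT u
    let uop : op (⟨X₀, hX₀⟩ : ObjectProperty.FullSubcategory X) ⟶ op (⟨T, hT⟩ : ObjectProperty.FullSubcategory X) :=
      Quiver.Hom.op (X := (⟨T, hT⟩ : ObjectProperty.FullSubcategory X)) (Y := ⟨X₀, hX₀⟩) (ObjectProperty.homMk u)
    have h := φ.hom.naturality uop
    exact (ConcreteCategory.congr_hom h ξ).symm
  have Φmono : ∀ (T : C) (hT : X T) (t : T ⟶ Cc),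
      φ.hom.app (op ⟨T, hT⟩) t = 0 → t = 0 := by
    intro T hT t h
    have h3 := congrArg (φ.inv.app (op ⟨T, hT⟩)) h
    rw [map_zero] at h3
    have h4 : (φ.hom.app (op ⟨T, hT⟩) ≫ φ.inv.app (op ⟨T, hT⟩)) t = t := by
      rw [Iso.hom_inv_id_app]; rfl
    have h5 : φ.inv.app (op ⟨T, hT⟩) (φ.hom.app (op ⟨T, hT⟩) t) = t := h4
    rw [h3] at h5
    exact h5.symm
  have Φsurj : ∀ (T : C) (hT : X T) (d : T ⟶ Dd),
      ∃ c : T ⟶ Cc, φ.hom.app (op ⟨T, hT⟩) c = d := by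
    intro T hT d
    refine ⟨φ.inv.app (op ⟨T, hT⟩) d, ?_⟩
    have h4 : (φ.inv.app (op ⟨T, hT⟩) ≫ φ.hom.app (op ⟨T, hT⟩)) d = d := by
      rw [Iso.inv_hom_id_app]; rfl
    exact h4
  -- cone of `biprod.lift ξ fD`
  obtain ⟨V, s₂, δV, hV⟩ := distinguished_cocone_triangle (biprod.lift ξ fD)
  let τC : Cc ⟶ V := biprod.inl ≫ s₂
  let τD : Dd ⟶ V := biprod.inr ≫ s₂
  obtain ⟨W, ρ, δW, hW⟩ := distinguished_cocone_triangle τC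
  obtain ⟨W', ρ', δW', hW'⟩ := distinguished_cocone_triangle τD
  have hs₂ : biprod.lift ξ fD ≫ s₂ = 0 := comp_distTriang_mor_zero₁₂ _ hV
  -- decomposition of maps from `X` into `V`
  have hdecomp : ∀ (T : C), X T → ∀ t : T ⟶ V, ∃ (c : T ⟶ Cc) (d : T ⟶ Dd),
      t = c ≫ τC + d ≫ τD := by
    intro T hT t
    have h0 : t ≫ δV = 0 := hrig hT hX₀ (t ≫ δV)
    obtain ⟨t', ht'⟩ := Triangle.coyoneda_exact₃ _ hV t h0
    dsimp only [Triangle.mk] at t' ht'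
    refine ⟨t' ≫ biprod.fst, t' ≫ biprod.snd, ?_⟩
    have : t' = (t' ≫ biprod.fst) ≫ biprod.inl + (t' ≫ biprod.snd) ≫ biprod.inr := by
      rw [Category.assoc, Category.assoc, ← Preadditive.comp_add, biprod.total]
      exact (Category.comp_id t').symm
    rw [ht']
    conv_lhs => rw [this]
    simp only [τC, τD, Preadditive.add_comp, Category.assoc]
  -- mono property on the C side
  have starC : ∀ (T : C), X T → ∀ t : T ⟶ Cc, t ≫ τC = 0 → t = 0 := by
    intro T hT t h
    have h1 : (t ≫ biprod.inl) ≫ s₂ = 0 := by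
      rw [Category.assoc]; exact h
    obtain ⟨u, hu⟩ := Triangle.coyoneda_exact₂ _ hV (t ≫ biprod.inl) h1
    dsimp only [Triangle.mk] at u hu
    have hξu : u ≫ ξ = t := by
      have := congrArg (fun p => p ≫ biprod.fst) hu
      simpa using this.symm
    have hfu : u ≫ fD = 0 := by
      have := congrArg (fun p => p ≫ biprod.snd) hu
      simpa using this.symm
    have h2 := Φnat T hT u
    rw [hξu, hfu] at h2
    exact Φmono T hT t h2.symm
  -- mono property on the D side
  have starD : ∀ (T : C), X T → ∀ t : T ⟶ Dd, t ≫ τD = 0 → t = 0 := by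
    intro T hT t h
    have h1 : (t ≫ biprod.inr) ≫ s₂ = 0 := by
      rw [Category.assoc]; exact h
    obtain ⟨u, hu⟩ := Triangle.coyoneda_exact₂ _ hV (t ≫ biprod.inr) h1
    dsimp only [Triangle.mk] at u hu
    have hξu : u ≫ ξ = 0 := by
      have := congrArg (fun p => p ≫ biprod.fst) hu
      simpa using this.symm
    have hfu : u ≫ fD = t := by
      have := congrArg (fun p => p ≫ biprod.snd) hu
      simpa using this.symm
    have h2 := Φnat T hT u
    rw [hξu, hfu] at h2
    exact h2.trans (φ.hom.app (op ⟨T, hT⟩)).hom.map_zero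
  -- every map from `X` to `V` factors through `τC`, hence is killed by `ρ`
  have ghostC : ∀ (T : C), X T → ∀ t : T ⟶ V, t ≫ ρ = 0 := by
    intro T hT t
    obtain ⟨c, d, rfl⟩ := hdecomp T hT t
    obtain ⟨d', hd'⟩ := Φsurj T hT d
    obtain ⟨u, hu⟩ := hξ hT d'
    have hud : u ≫ fD = d := by rw [Φnat T hT u, hu, hd']
    have hlift : biprod.lift d' d = u ≫ biprod.lift ξ fD := by
      apply biprod.hom_ext <;> simp [hu, hud]
    have key : c ≫ τC + d ≫ τD = (c - d') ≫ τC := by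
      have hz : biprod.lift d' d ≫ s₂ = 0 := by
        rw [hlift, Category.assoc, hs₂, comp_zero]
      rw [biprod.lift_eq, Preadditive.add_comp, Category.assoc, Category.assoc] at hz
      rw [Preadditive.sub_comp]
      have : d ≫ τD = - (d' ≫ τC) := by
        rw [eq_neg_iff_add_eq_zero]
        simpa only [τC, τD, Category.assoc] using (add_comm (d ≫ biprod.inr ≫ s₂)
          (d' ≫ biprod.inl ≫ s₂)) ▸ hz
      rw [this]
      abel
    have hτρ : τC ≫ ρ = 0 := comp_distTriang_mor_zero₁₂ _ hW
    rw [key, Category.assoc, hτρ, comp_zero]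
  have ghostD : ∀ (T : C), X T → ∀ t : T ⟶ V, t ≫ ρ' = 0 := by
    intro T hT t
    obtain ⟨c, d, rfl⟩ := hdecomp T hT t
    obtain ⟨u, hu⟩ := hξ hT c
    have hud : u ≫ fD = φ.hom.app (op ⟨T, hT⟩) c := by rw [Φnat T hT u, hu]
    have hlift : biprod.lift c (u ≫ fD) = u ≫ biprod.lift ξ fD := by
      apply biprod.hom_ext <;> simp [hu]
    have key : c ≫ τC + d ≫ τD = (d - u ≫ fD) ≫ τD := by
      have hz : biprod.lift c (u ≫ fD) ≫ s₂ = 0 := by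
        rw [hlift, Category.assoc, hs₂, comp_zero]
      rw [biprod.lift_eq, Preadditive.add_comp, Category.assoc, Category.assoc] at hz
      have : c ≫ τC = - ((u ≫ fD) ≫ τD) := by
        rw [eq_neg_iff_add_eq_zero]
        exact hz
      rw [this, Preadditive.sub_comp]
      abel
    have hτρ' : τD ≫ ρ' = 0 := comp_distTriang_mor_zero₁₂ _ hW'
    rw [key, Category.assoc, hτρ', comp_zero]
  -- Relation 1 (C side): [W⟦-1⟧] + [V] = [Cc]
  have R4C : clsRel C X (W⟦(-1:ℤ)⟧) + clsRel C X V = clsRel C X Cc := by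
    refine clsRel_add_of_ghost C X (Triangle.mk τC ρ δW).invRotate
      (inv_rot_of_distTriang _ hW) ?_
    intro A hA ζ
    revert ζ
    show ∀ ζ : A ⟶ V, ζ ≫ (ρ ≫ _) = 0
    intro ζ
    exact (Category.assoc _ _ _).symm.trans ((congrArg (· ≫ _) (ghostC A hA ζ)).trans zero_comp)
  have R4D : clsRel C X (W'⟦(-1:ℤ)⟧) + clsRel C X V = clsRel C X Dd := by
    refine clsRel_add_of_ghost C X (Triangle.mk τD ρ' δW').invRotate
      (inv_rot_of_distTriang _ hW') ?_
    intro A hA ζ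
    revert ζ
    show ∀ ζ : A ⟶ V, ζ ≫ (ρ' ≫ _) = 0
    intro ζ
    exact (Category.assoc _ _ _).symm.trans ((congrArg (· ≫ _) (ghostD A hA ζ)).trans zero_comp)
  -- Relation 2 (C side): [Cc⟦-1⟧] + [W⟦-1⟧] = [V⟦-1⟧]
  have R2C : clsRel C X (Cc⟦(-1:ℤ)⟧) + clsRel C X (W⟦(-1:ℤ)⟧) = clsRel C X (V⟦(-1:ℤ)⟧) := by
    refine clsRel_add_of_ghost C X
      ((Triangle.shiftFunctor C (-1)).obj (Triangle.mk τC ρ δW))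
      (Triangle.shift_distinguished _ hW (-1)) ?_
    intro A hA ζ
    revert ζ
    show ∀ ζ : A ⟶ W⟦(-1:ℤ)⟧, ζ ≫ ((-1 : ℤ).negOnePow • δW⟦(-1:ℤ)⟧' ≫
      (shiftFunctorComm C 1 (-1)).hom.app Cc) = 0
    intro ζ
    rw [Linear.comp_units_smul, ← Category.assoc,
      shift_ghost_aux C X τC ρ δW hW (fun T hT w hw => starC T hT w hw) hA ζ,
      zero_comp, smul_zero]
  have R2D : clsRel C X (Dd⟦(-1:ℤ)⟧) + clsRel C X (W'⟦(-1:ℤ)⟧) = clsRel C X (V⟦(-1:ℤ)⟧) := by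
    refine clsRel_add_of_ghost C X
      ((Triangle.shiftFunctor C (-1)).obj (Triangle.mk τD ρ' δW'))
      (Triangle.shift_distinguished _ hW' (-1)) ?_
    intro A hA ζ
    revert ζ
    show ∀ ζ : A ⟶ W'⟦(-1:ℤ)⟧, ζ ≫ ((-1 : ℤ).negOnePow • δW'⟦(-1:ℤ)⟧' ≫
      (shiftFunctorComm C 1 (-1)).hom.app Dd) = 0
    intro ζ
    rw [Linear.comp_units_smul, ← Category.assoc,
      shift_ghost_aux C X τD ρ' δW' hW' (fun T hT w hw => starD T hT w hw) hA ζ,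
      zero_comp, smul_zero]
  -- combine
  have hC : clsRel C X Cc + clsRel C X (Cc⟦(-1:ℤ)⟧) =
      clsRel C X V + clsRel C X (V⟦(-1:ℤ)⟧) := by
    rw [← R4C, ← R2C]; abel
  have hD : clsRel C X Dd + clsRel C X (Dd⟦(-1:ℤ)⟧) =
      clsRel C X V + clsRel C X (V⟦(-1:ℤ)⟧) := by
    rw [← R4D, ← R2D]; abel
  rw [hC, hD]


end
end

section
/- Let C be a triangulated category and X a contravariantly finite rigid subcategory. If Z lies in add(X * ΣX) (the closure under summands of objects admitting a triangle X₁ → X₀ → Z → ΣX₁ with Xᵢ ∈ X) and C ∈ C is arbitrary, then the map C(Z,C) → (mod X)(C(-,Z)|_X, C(-,C)|_X) induced by the restricted Yoneda functor H_X is surjective. -/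
open CategoryTheory CategoryTheory.Limits CategoryTheory.Pretriangulated Opposite

noncomputable section

universe v u

variable (C : Type u) [Category.{v} C] [Preadditive C] [HasZeroObject C]
  [HasShift C ℤ] [∀ n : ℤ, (shiftFunctor C n).Additive] [Pretriangulated C]
  [HasBinaryBiproducts C]

/-- The class `X * ΣX` of objects `Z` admitting a triangle `X₁ ⟶ X₀ ⟶ Z ⟶ ΣX₁`, `Xᵢ ∈ X`. -/
def StarSigma (X : C → Prop) : C → Prop := fun Z =>
  ∃ (X₁ X₀ : C) (_ : X X₁) (_ : X X₀) (f : X₁ ⟶ X₀) (g : X₀ ⟶ Z) (δ : Z ⟶ X₁⟦(1:ℤ)⟧),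
    Triangle.mk f g δ ∈ distTriang C

/-- `add(X * ΣX)`: the closure of `X * ΣX` under direct summands (and isomorphisms). -/
def AddStar (X : C → Prop) : C → Prop := fun Z =>
  ∃ (Z' W : C), StarSigma C X W ∧ Nonempty (W ≅ Z ⊞ Z')

lemma HX_map_app (X : C → Prop) {Z A : C} (φ : Z ⟶ A) (T : ObjectProperty.FullSubcategory X)
    (ξ : T.obj ⟶ Z) : ((HX C X).map φ).app (op T) ξ = ξ ≫ φ := rfl

lemma HX_naturality (X : C → Prop) {Z A : C} (η : (HX C X).obj Z ⟶ (HX C X).obj A)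
    {S T : ObjectProperty.FullSubcategory X} (u : S ⟶ T) (ξ : T.obj ⟶ Z) :
    (η.app (op S) (((show S.obj ⟶ T.obj from u.hom) ≫ ξ : S.obj ⟶ Z) :
        ((HX C X).obj Z).obj (op S)) : S.obj ⟶ A)
      = (show S.obj ⟶ T.obj from u.hom) ≫ (η.app (op T) ξ : T.obj ⟶ A) := by
  have h := η.naturality u.op
  have h2 := ConcreteCategory.congr_hom h ξ
  simp [HX] at h2
  exact h2

/-- If `Z ∈ add(X * ΣX)` then the map
`C(Z, A) → (mod X)(H_X(Z), H_X(A))` induced by `H_X` is surjective. -/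
theorem HX_surjective_on_homs_from_addStar
    [IsIdempotentComplete C] (X : C → Prop)
    (hadd : AdditiveSubcat C X) (hcf : ContravariantlyFinite C X) (hrig : Rigid C X)
    (Z A : C) (hZ : AddStar C X Z) :
    ∀ η : (HX C X).obj Z ⟶ (HX C X).obj A, ∃ φ : Z ⟶ A, (HX C X).map φ = η := by
  obtain ⟨Z', W, ⟨X₁, X₀, hX₁, hX₀, f, g, δ, hT⟩, ⟨e⟩⟩ := hZ
  intro η
  have hfg : f ≫ g = 0 := comp_distTriang_mor_zero₁₂ _ hT
  have hip : (biprod.inl ≫ e.inv) ≫ (e.hom ≫ biprod.fst) = 𝟙 Z := by simp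
  have hfa : f ≫ (η.app (op ⟨X₀, hX₀⟩) (g ≫ e.hom ≫ biprod.fst) : X₀ ⟶ A) = 0 := by
    have h := HX_naturality C X η
      (show (⟨X₁, hX₁⟩ : ObjectProperty.FullSubcategory X) ⟶ ⟨X₀, hX₀⟩ from ObjectProperty.homMk f) (g ≫ e.hom ≫ biprod.fst)
    dsimp only [ObjectProperty.homMk_hom] at h
    rw [← h]
    have h0 : (show X₁ ⟶ X₀ from f) ≫ (g ≫ e.hom ≫ biprod.fst) = (0 : X₁ ⟶ Z) := by
      rw [← Category.assoc]
      show (f ≫ g) ≫ _ = _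
      rw [hfg, zero_comp]
    rw [h0]
    exact map_zero _
  obtain ⟨ψ, hψ⟩ := Triangle.yoneda_exact₂ _ hT _ hfa
  change W ⟶ A at ψ
  have hψ' : (η.app (op ⟨X₀, hX₀⟩) (g ≫ e.hom ≫ biprod.fst) : X₀ ⟶ A) = g ≫ ψ := hψ
  refine ⟨(biprod.inl ≫ e.inv) ≫ ψ, ?_⟩
  ext ⟨T, hTmem⟩ ξ
  change T ⟶ Z at ξ
  have hξδ : (((ξ : T ⟶ Z) ≫ biprod.inl ≫ e.inv) : T ⟶ W) ≫ δ = 0 := hrig hTmem hX₁ _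
  obtain ⟨u, hu⟩ := Triangle.coyoneda_exact₃ _ hT _ hξδ
  change T ⟶ X₀ at u
  have hu' : ((ξ : T ⟶ Z) ≫ biprod.inl ≫ e.inv : T ⟶ W) = (u : T ⟶ X₀) ≫ g := hu
  have hnat := HX_naturality C X η
    (show (⟨T, hTmem⟩ : ObjectProperty.FullSubcategory X) ⟶ ⟨X₀, hX₀⟩ from ObjectProperty.homMk u) (g ≫ e.hom ≫ biprod.fst)
  show ((ξ : T ⟶ Z) ≫ ((biprod.inl ≫ e.inv) ≫ ψ) : T ⟶ A)
    = (η.app (op ⟨T, hTmem⟩) ξ : T ⟶ A)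
  have step1 : ((ξ : T ⟶ Z) ≫ ((biprod.inl ≫ e.inv) ≫ ψ) : T ⟶ A)
      = (u : T ⟶ X₀) ≫ (g ≫ ψ) := by
    rw [← Category.assoc, hu', Category.assoc]
  have step2 : ((show T ⟶ X₀ from u) ≫ (g ≫ e.hom ≫ biprod.fst) : T ⟶ Z)
      = (ξ : T ⟶ Z) := by
    rw [← Category.assoc, ← hu', Category.assoc, hip, Category.comp_id]
  dsimp only [ObjectProperty.homMk_hom] at hnat step2
  rw [step1, ← hψ', ← hnat, step2]

end
end

section
/- Let ζ : Z → ΣA be a morphism in a triangulated category C with Z ∈ add(X * ΣX), where X is a contravariantly finite rigid subcategory. Then ζ factors as ζ = ι ∘ σ through an object C ∈ X * ΣX such that H_X(σ) is an epimorphism and H_X(ι) is a monomorphism in mod X; consequently H_X(C) ≅ Im H_X(ζ). -/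
open CategoryTheory CategoryTheory.Limits CategoryTheory.Pretriangulated Opposite

noncomputable section

universe v u

variable (C : Type u) [Category.{v} C] [Preadditive C] [HasZeroObject C]
  [HasShift C ℤ] [∀ n : ℤ, (shiftFunctor C n).Additive] [Pretriangulated C]
  [HasBinaryBiproducts C]

/-- The component of `HX` applied to a morphism is postcomposition. -/
lemma HX_map_app_apply (X : C → Prop) {A B : C} (φ : A ⟶ B)
    (P : (ObjectProperty.FullSubcategory X)ᵒᵖ) (t : P.unop.obj ⟶ A) :
    ((HX C X).map φ).app P t = t ≫ φ := rfl

/-- Core construction: for `W ∈ X * ΣX` itself, a morphism `ζ : W ⟶ ΣA` factors through an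
object of `X * ΣX` via an `X`-epic followed by an `X`-monic. -/
lemma core_factorisation (X : C → Prop)
    (hadd : AdditiveSubcat C X) (hcf : ContravariantlyFinite C X) (hrig : Rigid C X)
    (W A : C) (ζ : W ⟶ A⟦(1:ℤ)⟧) (hW : StarSigma C X W) :
    ∃ (Cc : C) (σ : W ⟶ Cc) (ι : Cc ⟶ A⟦(1:ℤ)⟧),
      StarSigma C X Cc ∧ σ ≫ ι = ζ ∧
      (∀ ⦃T : C⦄, X T → ∀ t : T ⟶ Cc, ∃ s : T ⟶ W, s ≫ σ = t) ∧
      (∀ ⦃T : C⦄, X T → ∀ t : T ⟶ Cc, t ≫ ι = 0 → t = 0) := by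
  obtain ⟨X₁, X₀, hX₁, hX₀, f, g, δw, hTw⟩ := hW
  obtain ⟨B, a, b, hT1⟩ := distinguished_cocone_triangle₂ ζ
  obtain ⟨XB, x, hXB, hx⟩ := hcf B
  -- lift `x ≫ b : XB ⟶ W` through `g`
  obtain ⟨h', hh'⟩ : ∃ h' : XB ⟶ X₀, x ≫ b = h' ≫ g :=
    Triangle.coyoneda_exact₃ _ hTw (x ≫ b) (hrig hXB hX₁ _)
  set k : (XB ⊞ X₁) ⟶ X₀ := biprod.desc h' f with hk
  obtain ⟨Cc, q, δC, hTk⟩ := distinguished_cocone_triangle k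
  have hkq : k ≫ q = 0 := comp_distTriang_mor_zero₁₂ _ hTk
  have hbζ : b ≫ ζ = 0 := comp_distTriang_mor_zero₂₃ _ hT1
  have hfg : f ≫ g = 0 := comp_distTriang_mor_zero₁₂ _ hTw
  have hqδ : q ≫ δC = 0 := comp_distTriang_mor_zero₂₃ _ hTk
  have hh'q : h' ≫ q = 0 := by
    have h1 : h' = biprod.inl ≫ k := by simp [hk]
    rw [h1, Category.assoc, hkq, comp_zero]
  have hfq : f ≫ q = 0 := by
    have h1 : f = biprod.inr ≫ k := by simp [hk]
    rw [h1, Category.assoc, hkq, comp_zero]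
  have hkgζ : k ≫ (g ≫ ζ) = 0 := by
    apply biprod.hom_ext'
    · rw [comp_zero, ← Category.assoc, biprod.inl_desc, ← Category.assoc, ← hh',
        Category.assoc, hbζ, comp_zero]
    · rw [comp_zero, ← Category.assoc, biprod.inr_desc, ← Category.assoc, hfg, zero_comp]
  -- ι₀ with q ≫ ι₀ = g ≫ ζ
  obtain ⟨ι₀, hι₀⟩ : ∃ ι₀ : Cc ⟶ A⟦(1:ℤ)⟧, g ≫ ζ = q ≫ ι₀ :=
    Triangle.yoneda_exact₂ _ hTk (g ≫ ζ) hkgζ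
  -- σ with g ≫ σ = q and δw ≫ (biprod.inr)⟦1⟧' = σ ≫ δC
  obtain ⟨σ, hσ1, hσ2⟩ : ∃ σ : W ⟶ Cc, g ≫ σ = 𝟙 X₀ ≫ q ∧
      δw ≫ (biprod.inr : X₁ ⟶ XB ⊞ X₁)⟦(1:ℤ)⟧' = σ ≫ δC :=
    Pretriangulated.complete_distinguished_triangle_morphism
      (Triangle.mk f g δw) (Triangle.mk k q δC) hTw hTk (biprod.inr) (𝟙 X₀) (by show f ≫ 𝟙 X₀ = biprod.inr ≫ k; rw [Category.comp_id, hk, biprod.inr_desc])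
  rw [Category.id_comp] at hσ1
  -- correction term ψ
  obtain ⟨ψ, hψ⟩ : ∃ ψ : X₁⟦(1:ℤ)⟧ ⟶ A⟦(1:ℤ)⟧, σ ≫ ι₀ - ζ = δw ≫ ψ :=
    Triangle.yoneda_exact₃ _ hTw (σ ≫ ι₀ - ζ)
      (by show g ≫ (σ ≫ ι₀ - ζ) = 0
          rw [Preadditive.comp_sub, ← Category.assoc, hσ1, ← hι₀, sub_self])
  refine ⟨Cc, σ, ι₀ - δC ≫ ((biprod.snd : XB ⊞ X₁ ⟶ X₁)⟦(1:ℤ)⟧' ≫ ψ),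
    ⟨XB ⊞ X₁, X₀, hadd.2.1 hXB hX₁, hX₀, k, q, δC, hTk⟩, ?_, ?_, ?_⟩
  · -- σ ≫ ι = ζ
    rw [Preadditive.comp_sub, ← Category.assoc, ← hσ2]
    have h2 : (biprod.inr : X₁ ⟶ XB ⊞ X₁)⟦(1:ℤ)⟧' ≫ (biprod.snd : XB ⊞ X₁ ⟶ X₁)⟦(1:ℤ)⟧'
        = 𝟙 _ := by
      rw [← CategoryTheory.Functor.map_comp, biprod.inr_snd, CategoryTheory.Functor.map_id]
    rw [Category.assoc, ← Category.assoc _ _ ψ, h2, Category.id_comp]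
    rw [sub_eq_iff_eq_add] at hψ
    rw [hψ]; abel
  · -- surjectivity
    intro T hT t
    have ht : t ≫ δC = 0 := hrig hT (hadd.2.1 hXB hX₁) _
    obtain ⟨s, hs⟩ : ∃ s : T ⟶ X₀, t = s ≫ q := Triangle.coyoneda_exact₃ _ hTk t ht
    exact ⟨s ≫ g, by rw [Category.assoc, hσ1, ← hs]⟩
  · -- injectivity
    intro T hT t htι
    have ht : t ≫ δC = 0 := hrig hT (hadd.2.1 hXB hX₁) _
    obtain ⟨s, hs⟩ : ∃ s : T ⟶ X₀, t = s ≫ q := Triangle.coyoneda_exact₃ _ hTk t ht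
    have hqι : q ≫ (ι₀ - δC ≫ ((biprod.snd : XB ⊞ X₁ ⟶ X₁)⟦(1:ℤ)⟧' ≫ ψ)) = g ≫ ζ := by
      rw [Preadditive.comp_sub, ← hι₀, ← Category.assoc, hqδ, zero_comp, sub_zero]
    have hsgζ : (s ≫ g) ≫ ζ = 0 := by
      rw [Category.assoc, ← hqι, ← Category.assoc, ← hs, htι]
    obtain ⟨u, hu⟩ : ∃ u : T ⟶ B, s ≫ g = u ≫ b :=
      Triangle.coyoneda_exact₃ _ hT1 (s ≫ g) hsgζ
    obtain ⟨v, hv⟩ := hx hT u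
    have h2 : (s - v ≫ h') ≫ g = 0 := by
      rw [Preadditive.sub_comp, Category.assoc, ← hh', hu, ← hv, sub_eq_zero,
        Category.assoc]
    obtain ⟨w, hw⟩ : ∃ w : T ⟶ X₁, s - v ≫ h' = w ≫ f :=
      Triangle.coyoneda_exact₂ _ hTw (s - v ≫ h') h2
    rw [sub_eq_iff_eq_add] at hw
    rw [hs, hw, Preadditive.add_comp, Category.assoc, Category.assoc, hh'q, hfq,
      comp_zero, comp_zero, add_zero]

/-- A morphism `ζ : Z ⟶ ΣA` with `Z ∈ add(X * ΣX)` factors as `ζ = σ ≫ ι`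
through an object `Cc ∈ X * ΣX` with `H_X(σ)` epic and `H_X(ι)` monic; consequently
`H_X(Cc) ≅ Im H_X(ζ)`. -/
theorem factorisation_through_image
    [IsIdempotentComplete C] (X : C → Prop)
    (hadd : AdditiveSubcat C X) (hcf : ContravariantlyFinite C X) (hrig : Rigid C X)
    (Z A : C) (ζ : Z ⟶ A⟦(1:ℤ)⟧) (hZ : AddStar C X Z) :
    ∃ (Cc : C) (σ : Z ⟶ Cc) (ι : Cc ⟶ A⟦(1:ℤ)⟧),
      StarSigma C X Cc ∧ σ ≫ ι = ζ ∧
      Epi ((HX C X).map σ) ∧ Mono ((HX C X).map ι) ∧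
      Nonempty ((HX C X).obj Cc ≅ image ((HX C X).map ζ)) := by
  obtain ⟨Z', W, hWs, ⟨e⟩⟩ := hZ
  obtain ⟨Cc, σW, ι, hCc, hfact, hP1, hP2⟩ :=
    core_factorisation C X hadd hcf hrig W A (e.hom ≫ biprod.fst ≫ ζ) hWs
  set σ : Z ⟶ Cc := biprod.inl ≫ e.inv ≫ σW with hσ
  have hζ : σ ≫ ι = ζ := by
    rw [hσ, Category.assoc, Category.assoc, hfact, Iso.inv_hom_id_assoc,
      biprod.inl_fst_assoc]
  have hsurj : ∀ ⦃T : C⦄, X T → ∀ t : T ⟶ Cc, ∃ s : T ⟶ Z, s ≫ σ = t := by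
    intro T hT t
    obtain ⟨s, hs⟩ := hP1 hT t
    refine ⟨s ≫ e.hom ≫ biprod.fst, ?_⟩
    have hr0 : (s ≫ e.hom ≫ biprod.snd ≫ biprod.inr ≫ e.inv) ≫ σW = 0 := by
      apply hP2 hT
      rw [Category.assoc, hfact]
      simp
    have key : (s ≫ e.hom ≫ biprod.fst) ≫ σ
        + (s ≫ e.hom ≫ biprod.snd ≫ biprod.inr ≫ e.inv) ≫ σW
        = s ≫ e.hom ≫ (biprod.fst ≫ biprod.inl + biprod.snd ≫ biprod.inr)
            ≫ (e.inv ≫ σW) := by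
      rw [hσ]
      simp only [Preadditive.add_comp, Preadditive.comp_add, Category.assoc]
    have key2 : s ≫ e.hom ≫ (biprod.fst ≫ biprod.inl + biprod.snd ≫ biprod.inr)
        ≫ (e.inv ≫ σW) = s ≫ σW := by
      rw [biprod.total]
      simp
    rw [← hs, ← key2, ← key, hr0, add_zero]
  have hepi : Epi ((HX C X).map σ) := by
    have : ∀ P : (ObjectProperty.FullSubcategory X)ᵒᵖ, Epi (((HX C X).map σ).app P) := by
      intro P
      rw [AddCommGrpCat.epi_iff_surjective]
      intro t
      obtain ⟨s, hs⟩ := hsurj P.unop.property (t : P.unop.obj ⟶ Cc)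
      exact ⟨s, hs⟩
    exact NatTrans.epi_of_epi_app _
  have hmono : Mono ((HX C X).map ι) := by
    have : ∀ P : (ObjectProperty.FullSubcategory X)ᵒᵖ, Mono (((HX C X).map ι).app P) := by
      intro P
      rw [AddCommGrpCat.mono_iff_injective]
      rw [injective_iff_map_eq_zero]
      intro t ht
      exact hP2 P.unop.property (t : P.unop.obj ⟶ Cc) ht
    exact NatTrans.mono_of_mono_app _
  have hcomp : (HX C X).map σ ≫ (HX C X).map ι = (HX C X).map ζ := by
    rw [← CategoryTheory.Functor.map_comp, hζ]
  haveI := hepi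
  haveI := hmono
  haveI : StrongEpi ((HX C X).map σ) := strongEpi_of_epi _
  exact ⟨Cc, σ, ι, hCc, hζ, hepi, hmono,
    ⟨image.isoStrongEpiMono ((HX C X).map σ) ((HX C X).map ι) hcomp⟩⟩

end
end

section
/- Let X ⊆ T be additive, contravariantly finite, rigid subcategories of a triangulated category C. Then the ideal of relations I_T is contained in I_X inside the split Grothendieck group of C, so there is a canonical surjective group homomorphism Q : K₀(C, E_T, s_T) → K₀(C, E_X, s_X) sending [C]_T to [C]_X, and the index maps satisfy ind_X = Q ∘ ind_T as homomorphisms from the split Grothendieck group of C. -/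
open CategoryTheory CategoryTheory.Limits CategoryTheory.Pretriangulated Opposite

noncomputable section

universe v u

variable (C : Type u) [Category.{v} C] [Preadditive C] [HasZeroObject C]
  [HasShift C ℤ] [∀ n : ℤ, (shiftFunctor C n).Additive] [Pretriangulated C]
  [HasBinaryBiproducts C]

/-- An object is indecomposable: nonzero, and any biproduct decomposition is trivial. -/
def Indec (A : C) : Prop :=
  ¬ IsZero A ∧ ∀ ⦃B B' : C⦄, (A ≅ B ⊞ B') → IsZero B ∨ IsZero B'

/-- `τ : B ⟶ A` is a right `T`-approximation. -/
def IsRightApprox (T : C → Prop) {B A : C} (τ : B ⟶ A) : Prop :=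
  T B ∧ ∀ ⦃T' : C⦄, T T' → ∀ g : T' ⟶ A, ∃ h : T' ⟶ B, h ≫ τ = g

/-- `α : A ⟶ B` is a left `T`-approximation. -/
def IsLeftApprox (T : C → Prop) {A B : C} (α : A ⟶ B) : Prop :=
  T B ∧ ∀ ⦃T' : C⦄, T T' → ∀ g : A ⟶ T', ∃ h : B ⟶ T', α ≫ h = g

/-- `τ : B ⟶ A` is right minimal. -/
def RightMinimal {B A : C} (τ : B ⟶ A) : Prop := ∀ φ : B ⟶ B, φ ≫ τ = τ → IsIso φ

/-- `α : A ⟶ B` is left minimal. -/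
def LeftMinimal {A B : C} (α : A ⟶ B) : Prop := ∀ φ : B ⟶ B, α ≫ φ = α → IsIso φ

/-- `β : B ⟶ A` is a right almost split morphism in the subcategory `T`. -/
def RightAlmostSplit (T : C → Prop) {B A : C} (β : B ⟶ A) : Prop :=
  T B ∧ T A ∧ (¬ ∃ s : A ⟶ B, s ≫ β = 𝟙 A) ∧
  ∀ ⦃T' : C⦄, T T' → ∀ g : T' ⟶ A, (¬ ∃ s : A ⟶ T', s ≫ g = 𝟙 A) → ∃ h : T' ⟶ B, h ≫ β = g

/-- `α : A ⟶ B` is a left almost split morphism in the subcategory `T`. -/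
def LeftAlmostSplit (T : C → Prop) {A B : C} (α : A ⟶ B) : Prop :=
  T A ∧ T B ∧ (¬ ∃ s : B ⟶ A, α ≫ s = 𝟙 A) ∧
  ∀ ⦃T' : C⦄, T T' → ∀ g : A ⟶ T', (¬ ∃ s : T' ⟶ A, g ≫ s = 𝟙 A) → ∃ h : B ⟶ T', α ≫ h = g

/-- `T` has right almost split morphisms. -/
def HasRightAlmostSplit (T : C → Prop) : Prop :=
  ∀ ⦃A : C⦄, Indec C A → T A → ∃ (B : C) (β : B ⟶ A), RightAlmostSplit C T β

/-- `T` is locally bounded: for each indecomposable of `T`, only finitely many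
indecomposables of `T` (up to isomorphism) admit a nonzero morphism to or from it. -/
def LocallyBounded (T : C → Prop) : Prop :=
  ∀ ⦃A : C⦄, Indec C A → T A →
    ∃ s : Set C, s.Finite ∧ ∀ ⦃B : C⦄, Indec C B → T B →
      ((∃ f : A ⟶ B, f ≠ 0) ∨ (∃ f : B ⟶ A, f ≠ 0)) → ∃ B' ∈ s, Nonempty (B ≅ B')

/-- `T` is an `n`-cluster tilting subcategory. -/
def NClusterTilting (T : C → Prop) (n : ℕ) : Prop :=
  ContravariantlyFinite C T ∧ CovariantlyFinite C T ∧
  (∀ A : C, T A ↔ ∀ i : ℕ, 1 ≤ i → i ≤ n - 1 → ∀ ⦃B : C⦄, T B → ∀ f : B ⟶ A⟦(i:ℤ)⟧, f = 0) ∧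
  (∀ A : C, T A ↔ ∀ i : ℕ, 1 ≤ i → i ≤ n - 1 → ∀ ⦃B : C⦄, T B → ∀ f : A ⟶ B⟦(i:ℤ)⟧, f = 0)

/-- The objects of the subcategory `T`. -/
abbrev TObj (T : C → Prop) := {A : C // T A}

/-- Relations for the split Grothendieck group `K₀^sp(T)`. -/
def splitRel (T : C → Prop) : AddSubgroup (FreeAbelianGroup (TObj C T)) :=
  AddSubgroup.closure {x |
    (∃ A B Z : TObj C T, Nonempty (Z.1 ≅ A.1 ⊞ B.1) ∧
      x = FreeAbelianGroup.of Z - FreeAbelianGroup.of A - FreeAbelianGroup.of B) ∨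
    (∃ A B : TObj C T, Nonempty (A.1 ≅ B.1) ∧
      x = FreeAbelianGroup.of A - FreeAbelianGroup.of B)}

/-- The split Grothendieck group `K₀^sp(T)`. -/
abbrev K0split (T : C → Prop) := FreeAbelianGroup (TObj C T) ⧸ splitRel C T

/-- The class `[A]^sp` in `K₀^sp(T)`. -/
def clsSplit (T : C → Prop) (A : TObj C T) : K0split C T :=
  QuotientAddGroup.mk (FreeAbelianGroup.of A)

/-- A tower of triangles built from (minimal) right `T`-approximations of `U 0`, as used to
define the triangulated index: triangles `U (i+1) ⟶ Tobj i ⟶ U i ⟶ Σ U (i+1)` for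
`i = 0, …, n-2`, with `Tobj (n-1) = U (n-1) ∈ T`. -/
structure ApproxTower (T : C → Prop) (n : ℕ) where
  U : ℕ → C
  Tobj : ℕ → C
  τ : ∀ i, Tobj i ⟶ U i
  hT : ∀ i, T (Tobj i)
  hlast : Tobj (n - 1) = U (n - 1)
  tri : ∀ i, i ≤ n - 2 → ∃ (α : U (i + 1) ⟶ Tobj i) (δ : U i ⟶ (U (i + 1))⟦(1:ℤ)⟧),
    Triangle.mk α (τ i) δ ∈ distTriang C
  approx : ∀ i, i ≤ n - 2 → IsRightApprox C T (τ i) ∧ RightMinimal C (τ i)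

/-- An Auslander-Reiten `(n+2)`-angle `Tobj (n+1) → Tobj n → ⋯ → Tobj 1 → Tobj 0` in `T`,
given by a tower of triangles `Xc (i+1) ⟶ Tobj i ⟶ Xc i ⟶ Σ Xc (i+1)` for `i = 1, …, n`,
with `Tobj 0 = Xc 0` and `Tobj (n+1) = Xc (n+1)`. -/
structure ARAngle (T : C → Prop) (n : ℕ) where
  Xc : ℕ → C
  Tobj : ℕ → C
  α : ∀ i, Xc (i + 1) ⟶ Tobj i
  β : ∀ i, Tobj i ⟶ Xc i
  γ : ∀ i, Xc i ⟶ (Xc (i + 1))⟦(1:ℤ)⟧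
  tri : ∀ i, 1 ≤ i → i ≤ n → Triangle.mk (α i) (β i) (γ i) ∈ distTriang C
  hT : ∀ i, T (Tobj i)
  hT0 : Tobj 0 = Xc 0
  hTn : Tobj (n + 1) = Xc (n + 1)
  ras : RightAlmostSplit C T (β 1) ∧ RightMinimal C (β 1)
  las : LeftAlmostSplit C T (α n) ∧ LeftMinimal C (α n)
  rapprox : ∀ i, 2 ≤ i → i ≤ n → (IsRightApprox C T (β i) ∧ RightMinimal C (β i))
  lapprox : ∀ i, 1 ≤ i → i ≤ n - 1 → (IsLeftApprox C T (α i) ∧ LeftMinimal C (α i))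

/-- `C` has a Serre functor relative to the field `k`. -/
def HasSerreFunctor (k : Type*) [Field k] [Linear k C] : Prop :=
  ∃ (S : C ⥤ C) (_ : S.IsEquivalence)
    (e : ∀ A B : C, (A ⟶ B) ≃ₗ[k] Module.Dual k (B ⟶ S.obj A)),
    (∀ (A A' B : C) (u : A' ⟶ A) (g : A ⟶ B) (h : B ⟶ S.obj A'),
        e A' B (u ≫ g) h = e A B g (h ≫ S.map u)) ∧
    (∀ (A B B' : C) (g : A ⟶ B) (v : B ⟶ B') (h : B' ⟶ S.obj A),
        e A B' (g ≫ v) h = e A B g (v ≫ h))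

/-- For `X ⊆ T` additive, contravariantly finite, rigid subcategories, the
relation ideal `I_T` is contained in `I_X`, so there is a canonical surjection
`Q : K₀(C, E_T, s_T) → K₀(C, E_X, s_X)` with `Q [A]_T = [A]_X`, i.e. `ind_X = Q ∘ ind_T`. -/
theorem canonical_surjection_between_relative_K0
    [IsIdempotentComplete C] (k : Type*) [Field k] [Linear k C]
    [∀ A B : C, Module.Finite k (A ⟶ B)]
    (X T : C → Prop) (hXT : ∀ ⦃A : C⦄, X A → T A)
    (haddX : AdditiveSubcat C X) (hcfX : ContravariantlyFinite C X) (hrigX : Rigid C X)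
    (haddT : AdditiveSubcat C T) (hcfT : ContravariantlyFinite C T) (hrigT : Rigid C T) :
    relRel C T ≤ relRel C X ∧
    ∃ Q : K0rel C T →+ K0rel C X, Function.Surjective Q ∧
      ∀ A : C, Q (clsRel C T A) = clsRel C X A := by
  have hle : relRel C T ≤ relRel C X := by
    apply AddSubgroup.closure_mono
    rintro x ⟨A, B, Z, f, g, δ, hdt, hvan, rfl⟩
    exact ⟨A, B, Z, f, g, δ, hdt, fun T' hT' ξ => hvan (hXT hT') ξ, rfl⟩
  refine ⟨hle, QuotientAddGroup.map _ _ (AddMonoidHom.id _) (fun x hx => hle hx),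
    ?_, fun A => rfl⟩
  intro y
  obtain ⟨x, rfl⟩ := QuotientAddGroup.mk_surjective y
  exact ⟨QuotientAddGroup.mk x, rfl⟩

end
end

section
/- Let T be an n-cluster tilting subcategory of C, C an object, and T_{n-1} → ... → T₀ → C a tower of triangles where each τᵢ : Tᵢ → V_{i−0.5} is a (minimal) right T-approximation. Then in K₀(C, E_T, s_T) one has [C]_T = Σᵢ₌₀^{n−1} (−1)ⁱ [Tᵢ]_T. -/
open CategoryTheory CategoryTheory.Limits CategoryTheory.Pretriangulated Opposite

noncomputable section

universe v u

variable (C : Type u) [Category.{v} C] [Preadditive C] [HasZeroObject C]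
  [HasShift C ℤ] [∀ n : ℤ, (shiftFunctor C n).Additive] [Pretriangulated C]
  [HasBinaryBiproducts C]

lemma relRel_rel (X : C → Prop) {A B Z : C} (f : A ⟶ B) (g : B ⟶ Z) (δ : Z ⟶ A⟦(1:ℤ)⟧)
    (hdist : Triangle.mk f g δ ∈ distTriang C)
    (hfac : ∀ ⦃T : C⦄, X T → ∀ ξ : T ⟶ Z, ξ ≫ δ = 0) :
    clsRel C X Z = clsRel C X B - clsRel C X A := by
  have hx : (FreeAbelianGroup.of A - FreeAbelianGroup.of B + FreeAbelianGroup.of Z) ∈ relRel C X :=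
    AddSubgroup.subset_closure ⟨A, B, Z, f, g, δ, hdist, hfac, rfl⟩
  have h0 : (QuotientAddGroup.mk (FreeAbelianGroup.of A - FreeAbelianGroup.of B +
      FreeAbelianGroup.of Z) : K0rel C X) = 0 := (QuotientAddGroup.eq_zero_iff _).mpr hx
  have h1 : clsRel C X A - clsRel C X B + clsRel C X Z = 0 := by
    rw [← h0]; rfl
  have := sub_eq_zero.mpr h1.symm
  linear_combination (norm := abel) h1

/-- Given a tower of triangles of (minimal) right `T`-approximations of
an object, one has `[C]_T = Σᵢ₌₀^{n−1} (−1)ⁱ [Tᵢ]_T` in `K₀(C, E_T, s_T)`. -/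
theorem class_equals_alternating_sum_of_tower
    [IsIdempotentComplete C] (k : Type*) [Field k] [Linear k C]
    [∀ A B : C, Module.Finite k (A ⟶ B)]
    (T : C → Prop) (haddT : AdditiveSubcat C T)
    (n : ℕ) (hn : 2 ≤ n) (hct : NClusterTilting C T n)
    (tw : ApproxTower C T n) :
    clsRel C T (tw.U 0) = ∑ i ∈ Finset.range n, ((-1 : ℤ))^i • clsRel C T (tw.Tobj i) := by
  have key : ∀ m, m ≤ n - 1 →
      clsRel C T (tw.U 0) =
        (∑ i ∈ Finset.range m, ((-1 : ℤ))^i • clsRel C T (tw.Tobj i)) +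
          ((-1 : ℤ))^m • clsRel C T (tw.U m) := by
    intro m
    induction m with
    | zero => intro _; simp
    | succ m ih =>
      intro hm
      have hm2 : m ≤ n - 2 := by omega
      obtain ⟨α, δ, hdist⟩ := tw.tri m hm2
      have happ := (tw.approx m hm2).1
      have hfac : ∀ ⦃T' : C⦄, T T' → ∀ ξ : T' ⟶ tw.U m, ξ ≫ δ = 0 := by
        intro T' hT' ξ
        obtain ⟨h, hh⟩ := happ.2 hT' ξ
        have hz := comp_distTriang_mor_zero₂₃ _ hdist
        change tw.τ m ≫ δ = 0 at hz
        rw [← hh, Category.assoc, hz, comp_zero]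
      have hrel := relRel_rel C T α (tw.τ m) δ hdist hfac
      rw [ih (by omega), hrel, Finset.sum_range_succ, smul_sub, pow_succ,
        mul_neg_one, neg_smul]
      abel
  obtain ⟨m, rfl⟩ : ∃ m, n = m + 1 := ⟨n - 1, by omega⟩
  have h := key m (by omega)
  have hl : tw.Tobj m = tw.U m := by simpa using tw.hlast
  rw [Finset.sum_range_succ, h, hl]

end
end

section
/- Let C be a triangulated category and X a contravariantly finite rigid subcategory. For a triangle A --α→ B --β→ C --γ→ ΣA in C, the image β̄ of β in C/[X^⊥₀] is an epimorphism if and only if H_X(β) is an epimorphism in mod X, if and only if γ̄ = 0 in C/[X^⊥₀]; dually β̄ is a monomorphism if and only if H_X(β) is monic, if and only if ᾱ = 0; and β̄ is regular if and only if H_X(β) is an isomorphism, if and only if ᾱ = 0 = γ̄. -/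
open CategoryTheory CategoryTheory.Limits CategoryTheory.Pretriangulated Opposite

noncomputable section

universe v u

variable (C : Type u) [Category.{v} C] [Preadditive C] [HasZeroObject C]
  [HasShift C ℤ] [∀ n : ℤ, (shiftFunctor C n).Additive] [Pretriangulated C]
  [HasBinaryBiproducts C]

section Aux

open ZeroObject

variable {C}
variable (X : C → Prop)

lemma perp_biprod {P Q : C} (hP : Perp C X P) (hQ : Perp C X Q) : Perp C X (P ⊞ Q) :=
  fun _ hT f => biprod.hom_ext f 0
    (by rw [zero_comp]; exact hP hT _) (by rw [zero_comp]; exact hQ hT _)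

instance congruence_perpRel : Congruence (perpRel C X) where
  equivalence :=
    { refl := fun f => ⟨0, 0, 0, fun _ _ g => (isZero_zero C).eq_of_tgt g 0,
        by rw [sub_self, zero_comp]⟩
      symm := by
        rintro f g ⟨P, p, q, hP, h⟩
        exact ⟨P, -p, q, hP, by rw [Preadditive.neg_comp, ← h, neg_sub]⟩
      trans := by
        rintro f g h ⟨P, p, q, hP, hfg⟩ ⟨P', p', q', hP', hgh⟩
        refine ⟨P ⊞ P', biprod.lift p p', biprod.desc q q', perp_biprod X hP hP', ?_⟩
        rw [biprod.lift_desc, ← hfg, ← hgh]; abel }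
  comp_left := by
    rintro _ _ _ f g g' ⟨P, p, q, hP, h⟩
    exact ⟨P, f ≫ p, q, hP, by rw [← Preadditive.comp_sub, h, Category.assoc]⟩
  comp_right := by
    rintro _ _ _ f f' g ⟨P, p, q, hP, h⟩
    exact ⟨P, p, q ≫ g, hP, by rw [← Preadditive.sub_comp, h, Category.assoc]⟩

lemma vanish_iff_factors (hcf : ContravariantlyFinite C X) (hrig : Rigid C X)
    {M N : C} (f : M ⟶ N) :
    (∀ ⦃T : C⦄, X T → ∀ g : T ⟶ M, g ≫ f = 0) ↔
      ∃ (P : C) (p : M ⟶ P) (q : P ⟶ N), Perp C X P ∧ f = p ≫ q := by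
  constructor
  · intro h
    obtain ⟨XM, ξ, hXM, happ⟩ := hcf M
    obtain ⟨P, p, δ, hT⟩ := Pretriangulated.distinguished_cocone_triangle ξ
    have hξp : ξ ≫ p = 0 := comp_distTriang_mor_zero₁₂ _ hT
    have hP : Perp C X P := by
      intro T hTX t
      obtain ⟨g, hg⟩ := Triangle.coyoneda_exact₃ _ hT t (hrig hTX hXM _)
      obtain ⟨u, hu⟩ := happ hTX g
      have hg' : t = g ≫ p := hg
      rw [hg', ← hu]; exact (Category.assoc u ξ p).trans (by rw [hξp, comp_zero])
    obtain ⟨q, hq⟩ := Triangle.yoneda_exact₂ _ hT f (h hXM ξ)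
    exact ⟨P, p, q, hP, hq⟩
  · rintro ⟨P, p, q, hP, rfl⟩ T hT g
    rw [← Category.assoc, hP hT (g ≫ p), zero_comp]

instance : (quotPerp C X).Full := inferInstanceAs ((Quotient.functor (perpRel C X)).Full)

lemma quot_map_eq_zero_iff (hcf : ContravariantlyFinite C X) (hrig : Rigid C X)
    {M N : C} (f : M ⟶ N) :
    (quotPerp C X).map f = (quotPerp C X).map 0 ↔
      ∀ ⦃T : C⦄, X T → ∀ g : T ⟶ M, g ≫ f = 0 := by
  rw [show quotPerp C X = Quotient.functor (perpRel C X) from rfl,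
    Quotient.functor_map_eq_iff]
  rw [show perpRel C X f 0 ↔
      ∃ (P : C) (p : M ⟶ P) (q : P ⟶ N), Perp C X P ∧ f = p ≫ q by
    unfold perpRel; simp only [sub_zero]]
  exact (vanish_iff_factors X hcf hrig f).symm

lemma quot_map_eq_iff {M N : C} (f g : M ⟶ N) :
    (quotPerp C X).map f = (quotPerp C X).map g ↔ perpRel C X f g :=
  Quotient.functor_map_eq_iff (perpRel C X) f g

end Aux

/-- For a triangle `A --α→ B --β→ Z --γ→ ΣA`: `β̄` is epic in `C/[X^⊥₀]`
iff `H_X(β)` is epic iff `γ̄ = 0`; `β̄` is monic iff `H_X(β)` is monic iff `ᾱ = 0`; and `β̄`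
is regular iff `H_X(β)` is an isomorphism iff `ᾱ = 0 = γ̄`. -/
theorem quotient_epi_mono_regular_characterisation
    [IsIdempotentComplete C] (X : C → Prop)
    (hadd : AdditiveSubcat C X) (hcf : ContravariantlyFinite C X) (hrig : Rigid C X)
    {A B Z : C} (α : A ⟶ B) (β : B ⟶ Z) (γ : Z ⟶ A⟦(1:ℤ)⟧)
    (hdist : Triangle.mk α β γ ∈ distTriang C) :
    (Epi ((quotPerp C X).map β) ↔ Epi ((HX C X).map β)) ∧
    (Epi ((quotPerp C X).map β) ↔ (quotPerp C X).map γ = (quotPerp C X).map 0) ∧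
    (Mono ((quotPerp C X).map β) ↔ Mono ((HX C X).map β)) ∧
    (Mono ((quotPerp C X).map β) ↔ (quotPerp C X).map α = (quotPerp C X).map 0) ∧
    ((Mono ((quotPerp C X).map β) ∧ Epi ((quotPerp C X).map β)) ↔ IsIso ((HX C X).map β)) ∧
    ((Mono ((quotPerp C X).map β) ∧ Epi ((quotPerp C X).map β)) ↔
      ((quotPerp C X).map α = (quotPerp C X).map 0 ∧
       (quotPerp C X).map γ = (quotPerp C X).map 0)) := by
  have hαβ : α ≫ β = 0 := comp_distTriang_mor_zero₁₂ _ hdist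
  have hβγ : β ≫ γ = 0 := comp_distTriang_mor_zero₂₃ _ hdist
  -- γ̄ = 0 iff all X-maps into Z kill γ
  have hγ : (quotPerp C X).map γ = (quotPerp C X).map 0 ↔
      ∀ ⦃T : C⦄, X T → ∀ ξ : T ⟶ Z, ξ ≫ γ = 0 := quot_map_eq_zero_iff X hcf hrig γ
  have hα : (quotPerp C X).map α = (quotPerp C X).map 0 ↔
      ∀ ⦃T : C⦄, X T → ∀ g : T ⟶ A, g ≫ α = 0 := quot_map_eq_zero_iff X hcf hrig α
  -- H_X(β) epi iff all X-maps into Z kill γ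
  have hHepi : Epi ((HX C X).map β) ↔
      ∀ ⦃T : C⦄, X T → ∀ ξ : T ⟶ Z, ξ ≫ γ = 0 := by
    rw [NatTrans.epi_iff_epi_app]
    constructor
    · intro h T hT ξ
      have h2 := (AddCommGrpCat.epi_iff_surjective _).mp (h (op ⟨T, hT⟩))
      obtain ⟨η, hη⟩ := h2 ξ
      have hη' : η ≫ β = ξ := hη
      rw [← hη']; exact (Category.assoc (W := T) (X := B) η β γ).trans (by rw [hβγ]; exact comp_zero)
    · intro h T
      rw [AddCommGrpCat.epi_iff_surjective]
      intro ξ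
      obtain ⟨η, hη⟩ := Triangle.coyoneda_exact₃ _ hdist
        (ξ : T.unop.obj ⟶ Z) (h T.unop.property ξ)
      exact ⟨η, hη.symm⟩
  -- H_X(β) mono iff all X-maps into A kill α
  have hHmono : Mono ((HX C X).map β) ↔
      ∀ ⦃T : C⦄, X T → ∀ g : T ⟶ A, g ≫ α = 0 := by
    rw [NatTrans.mono_iff_mono_app]
    constructor
    · intro h T hT g
      have h2 := (AddCommGrpCat.mono_iff_injective _).mp (h (op ⟨T, hT⟩))
      have h0 : ((HX C X).map β).app (op ⟨T, hT⟩) (g ≫ α) =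
          ((HX C X).map β).app (op ⟨T, hT⟩) 0 := by
        show (g ≫ α) ≫ β = (0 : T ⟶ B) ≫ β
        rw [Category.assoc, hαβ, comp_zero, zero_comp]
      exact h2 h0
    · intro h T
      rw [AddCommGrpCat.mono_iff_injective]
      intro x y hxy
      have hxy' : (x : T.unop.obj ⟶ B) ≫ β = (y : T.unop.obj ⟶ B) ≫ β := hxy
      have hsub : ((x : T.unop.obj ⟶ B) - y) ≫ β = 0 := by
        exact (Preadditive.sub_comp (P := T.unop.obj) (Q := B) x y β).trans (by rw [hxy', sub_self])
      obtain ⟨s, hs⟩ := Triangle.coyoneda_exact₂ _ hdist _ hsub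
      have : (x : T.unop.obj ⟶ B) - y = 0 := by rw [hs]; exact h T.unop.property s
      exact sub_eq_zero.mp this
  -- β̄ epi iff γ̄ = 0
  have hepi : Epi ((quotPerp C X).map β) ↔
      (quotPerp C X).map γ = (quotPerp C X).map 0 := by
    constructor
    · intro h
      rw [← cancel_epi ((quotPerp C X).map β), ← Functor.map_comp, ← Functor.map_comp,
        hβγ, comp_zero]
    · intro h
      replace h := hγ.mp h
      constructor
      intro W u v huv
      obtain ⟨W⟩ := W
      obtain ⟨f, rfl⟩ := (quotPerp C X).map_surjective u
      obtain ⟨g, rfl⟩ := (quotPerp C X).map_surjective v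
      erw [← Functor.map_comp, ← Functor.map_comp, quot_map_eq_iff] at huv
      obtain ⟨P, p, q, hP, hpq⟩ := huv
      rw [← Preadditive.comp_sub] at hpq
      erw [quot_map_eq_iff]
      have hv : ∀ ⦃T : C⦄, X T → ∀ t : T ⟶ Z, t ≫ (f - g) = 0 := by
        intro T hT t
        obtain ⟨η, hη⟩ := Triangle.coyoneda_exact₃ _ hdist t (h hT t)
        have hη' : t = η ≫ β := hη
        rw [hη']; exact (Category.assoc (X := B) η β (f - g)).trans (by rw [hpq]; exact (Category.assoc (X := B) η p q).symm.trans ((congrArg (· ≫ q) (hP hT (η ≫ p))).trans zero_comp))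
      obtain ⟨P', p', q', hP', h'⟩ := (vanish_iff_factors X hcf hrig (f - g)).mp hv
      exact ⟨P', p', q', hP', h'⟩
  -- β̄ mono iff ᾱ = 0
  have hmono : Mono ((quotPerp C X).map β) ↔
      (quotPerp C X).map α = (quotPerp C X).map 0 := by
    constructor
    · intro h
      rw [← cancel_mono ((quotPerp C X).map β), ← Functor.map_comp, ← Functor.map_comp,
        hαβ, zero_comp]
    · intro h
      replace h := hα.mp h
      constructor
      intro W u v huv
      obtain ⟨W⟩ := W
      obtain ⟨f, rfl⟩ := (quotPerp C X).map_surjective u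
      obtain ⟨g, rfl⟩ := (quotPerp C X).map_surjective v
      erw [← Functor.map_comp, ← Functor.map_comp, quot_map_eq_iff] at huv
      obtain ⟨P, p, q, hP, hpq⟩ := huv
      rw [← Preadditive.sub_comp] at hpq
      erw [quot_map_eq_iff]
      have hv : ∀ ⦃T : C⦄, X T → ∀ t : T ⟶ W, t ≫ (f - g) = 0 := by
        intro T hT t
        have h1 : (t ≫ (f - g)) ≫ β = 0 := by
          rw [Category.assoc, hpq, ← Category.assoc, hP hT (t ≫ p), zero_comp]
        obtain ⟨s, hs⟩ := Triangle.coyoneda_exact₂ _ hdist _ h1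
        rw [hs]; exact h hT s
      obtain ⟨P', p', q', hP', h'⟩ := (vanish_iff_factors X hcf hrig (f - g)).mp hv
      exact ⟨P', p', q', hP', h'⟩
  refine ⟨hepi.trans (hγ.trans hHepi.symm), hepi,
    hmono.trans (hα.trans hHmono.symm), hmono, ?_, ?_⟩
  · constructor
    · rintro ⟨hm, he⟩
      have : Mono ((HX C X).map β) := hHmono.mpr (hα.mp (hmono.mp hm))
      have : Epi ((HX C X).map β) := hHepi.mpr (hγ.mp (hepi.mp he))
      exact isIso_of_mono_of_epi _
    · intro h
      exact ⟨hmono.mpr (hα.mpr (hHmono.mp inferInstance)),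
        hepi.mpr (hγ.mpr (hHepi.mp inferInstance))⟩
  · exact ⟨fun ⟨hm, he⟩ => ⟨hmono.mp hm, hepi.mp he⟩,
      fun ⟨h1, h2⟩ => ⟨hmono.mpr h1, hepi.mpr h2⟩⟩

end
end

section
/- Let C be a triangulated category and X a contravariantly finite rigid subcategory. Every finitely presented functor L ∈ mod X is isomorphic to H_X(Z) = C(-,Z)|_X for some object Z fitting into a triangle X₁ → X₀ → Z → ΣX₁ with X₀, X₁ ∈ X; in particular Z ∈ X * ΣX. -/
open CategoryTheory CategoryTheory.Limits CategoryTheory.Pretriangulated Opposite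

noncomputable section

universe v u

variable (C : Type u) [Category.{v} C] [Preadditive C] [HasZeroObject C]
  [HasShift C ℤ] [∀ n : ℤ, (shiftFunctor C n).Additive] [Pretriangulated C]
  [HasBinaryBiproducts C]

/-- Every finitely presented functor `L ∈ mod X` is isomorphic to
`H_X(Z)` for an object `Z` fitting into a triangle `X₁ ⟶ X₀ ⟶ Z ⟶ ΣX₁` with `Xᵢ ∈ X`;
in particular `Z ∈ X * ΣX`. -/
theorem finPres_iso_HX_of_cone
    [IsIdempotentComplete C] (X : C → Prop)
    (hadd : AdditiveSubcat C X) (hcf : ContravariantlyFinite C X) (hrig : Rigid C X)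
    (L : (ObjectProperty.FullSubcategory X)ᵒᵖ ⥤ AddCommGrpCat.{v}) (hL : FinPres C X L) :
    ∃ (Z X₁ X₀ : C) (_ : X X₁) (_ : X X₀) (f : X₁ ⟶ X₀) (g : X₀ ⟶ Z)
      (δ : Z ⟶ X₁⟦(1:ℤ)⟧), (Triangle.mk f g δ ∈ distTriang C) ∧
        Nonempty (L ≅ (HX C X).obj Z) := by
  obtain ⟨X₁, X₀, hX₁, hX₀, f, ⟨e⟩⟩ := hL
  obtain ⟨Z, g, δ, hT⟩ := Pretriangulated.distinguished_cocone_triangle f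
  refine ⟨Z, X₁, X₀, hX₁, hX₀, f, g, δ, hT, ?_⟩
  have hfg : f ≫ g = 0 := comp_distTriang_mor_zero₁₂ _ hT
  have w : (HX C X).map f ≫ (HX C X).map g = 0 := by
    ext k (x : (unop k).obj ⟶ X₁)
    show (x ≫ f) ≫ g = _
    rw [Category.assoc, hfg, comp_zero]; rfl
  -- The cofork `H_X g` is a colimit cokernel cofork of `H_X f`.
  have hc : IsColimit (CokernelCofork.ofπ ((HX C X).map g) w) := by
    apply evaluationJointlyReflectsColimits
    intro k
    refine (isColimitMapCoconeCoforkEquiv' ((evaluation _ _).obj k) w).symm ?_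
    -- Pointwise: a cokernel cofork in `AddCommGrp`.
    let S : ShortComplex AddCommGrpCat.{v} :=
      ShortComplex.mk (((HX C X).map f).app k) (((HX C X).map g).app k)
        (by rw [← NatTrans.comp_app, w]; rfl)
    have hSexact : S.Exact := by
      rw [ShortComplex.ab_exact_iff]
      intro (x : (unop k).obj ⟶ X₀) (hx : x ≫ g = 0)
      obtain ⟨y, hy⟩ := Triangle.coyoneda_exact₂ _ hT x hx
      exact ⟨y, hy.symm⟩
    have hSepi : Epi S.g := by
      rw [AddCommGrpCat.epi_iff_surjective]
      intro (x : (unop k).obj ⟶ Z)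
      obtain ⟨y, hy⟩ := Triangle.coyoneda_exact₃ _ hT x (hrig (unop k).property hX₁ _)
      exact ⟨y, hy.symm⟩
    exact hSexact.gIsCokernel
  exact ⟨e.trans (IsColimit.coconePointUniqueUpToIso (cokernelIsCokernel ((HX C X).map f)) hc)⟩

end
end
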